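/- arXiv:2412.15116 — 4 statements merged into one kernel-verified Lean document; each statement's English description precedes it below -/
import Mathlib

section
/- Let n ≥ 1, and let w_1, …, w_n : ℤ → [0,∞) and Q_{i,j} : ℤ → [0,∞) (for 1 ≤ i < j ≤ n) all be log-concave sequences, i.e. w_i(k−1)·w_i(k+1) ≤ w_i(k)² and Q_{i,j}(k−1)·Q_{i,j}(k+1) ≤ Q_{i,j}(k)² for all k ∈ ℤ, with no internal zeros. Assume the discrete ensemble P_{n,w,Q} is well defined (its normalizing constant is finite and positive). Then for every index i ∈ {1, …, n}, the distribution of the i-th coordinate h_i under P_{n,w,Q} is log-concave: P_{n,w,Q}(h_i = k−1) · P_{n,w,Q}(h_i = k+1) ≤ P_{n,w,Q}(h_i = k)² for all k ∈ ℤ. -/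
open scoped BigOperators

noncomputable section

/-- Unnormalized weight of a configuration `h` in the discrete ensemble `P_{n,w,Q}`:
`∏_{i<j} Q_{i,j}(h_j - h_i) · ∏_j w_j(h_j)`. -/
def ensembleWeight (n : ℕ) (w : Fin n → ℤ → ℝ) (Q : Fin n → Fin n → ℤ → ℝ)
    (h : Fin n → ℤ) : ℝ :=
  (∏ i : Fin n, ∏ j : Fin n, if i < j then Q i j (h j - h i) else 1) *
    ∏ j : Fin n, w j (h j)

/-- `P_{n,w,Q}(h_i = k)`: the probability, under the discrete ensemble on strictly
increasing integer tuples, that the `i`-th coordinate equals `k`. -/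
def ensembleProb (n : ℕ) (w : Fin n → ℤ → ℝ) (Q : Fin n → Fin n → ℤ → ℝ)
    (i : Fin n) (k : ℤ) : ℝ :=
  (∑' h : {h : Fin n → ℤ // StrictMono h ∧ h i = k}, ensembleWeight n w Q h.1) /
    ∑' h : {h : Fin n → ℤ // StrictMono h}, ensembleWeight n w Q h.1

/-! ### Auxiliary one-dimensional log-concavity lemmas -/

/-- Sliding lemma for a log-concave sequence with interval support. -/
lemma lc_slide {u : ℤ → ℝ} (h0 : ∀ k, 0 ≤ u k)
    (hlc : ∀ k, u (k - 1) * u (k + 1) ≤ (u k) ^ 2)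
    (hsupp : ∀ k₁ k₂ k₃ : ℤ, k₁ ≤ k₂ → k₂ ≤ k₃ → 0 < u k₁ → 0 < u k₃ → 0 < u k₂) :
    ∀ a b : ℤ, a ≤ b → u (a - 1) * u b ≤ u a * u (b - 1) := by
  have key : ∀ m : ℕ, ∀ a b : ℤ, b = a + m → u (a - 1) * u b ≤ u a * u (b - 1) := by
    intro m
    induction m with
    | zero =>
      intro a b hb
      have hba : b = a := by omega
      subst hba
      exact (mul_comm _ _).le
    | succ m ih =>
      intro a b hb
      have hab : a + 1 ≤ b := by omega
      by_cases h2 : 0 < u (b - 2) ∧ 0 < u (b - 1)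
      · obtain ⟨p2, p1⟩ := h2
        have h1 : u (a - 1) * u (b - 1) ≤ u a * u (b - 2) := by
          have := ih a (b - 1) (by omega)
          have e : b - 1 - 1 = b - 2 := by ring
          rwa [e] at this
        have h2' : u (b - 2) * u b ≤ (u (b - 1)) ^ 2 := by
          have := hlc (b - 1)
          have e1 : b - 1 - 1 = b - 2 := by ring
          have e2 : b - 1 + 1 = b := by ring
          rwa [e1, e2] at this
        have hpos : 0 < u (b - 2) * u (b - 1) := mul_pos p2 p1
        refine le_of_mul_le_mul_right ?_ hpos
        calc u (a - 1) * u b * (u (b - 2) * u (b - 1))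
            = (u (a - 1) * u (b - 1)) * (u (b - 2) * u b) := by ring
          _ ≤ (u a * u (b - 2)) * (u (b - 1)) ^ 2 :=
              mul_le_mul h1 h2' (mul_nonneg (h0 _) (h0 _)) (mul_nonneg (h0 _) (h0 _))
          _ = u a * u (b - 1) * (u (b - 2) * u (b - 1)) := by ring
      · rcases (h0 (a - 1)).eq_or_lt with hz | hp
        · rw [← hz, zero_mul]; exact mul_nonneg (h0 _) (h0 _)
        rcases (h0 b).eq_or_lt with hz | hpb
        · rw [← hz, mul_zero]; exact mul_nonneg (h0 _) (h0 _)
        exact absurd ⟨hsupp (a - 1) (b - 2) b (by omega) (by omega) hp hpb,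
          hsupp (a - 1) (b - 1) b (by omega) (by omega) hp hpb⟩ h2
  intro a b hab
  exact key (b - a).toNat a b (by omega)

/-- Rebracketing lemma: moving a pair of arguments closer together (preserving the sum)
increases the product, for a log-concave sequence with interval support. -/
lemma lc_rebracket {u : ℤ → ℝ} (h0 : ∀ k, 0 ≤ u k)
    (hlc : ∀ k, u (k - 1) * u (k + 1) ≤ (u k) ^ 2)
    (hsupp : ∀ k₁ k₂ k₃ : ℤ, k₁ ≤ k₂ → k₂ ≤ k₃ → 0 < u k₁ → 0 < u k₃ → 0 < u k₂) :
    ∀ x y p q : ℤ, x + y = p + q → min x y ≤ p → min x y ≤ q →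
      u x * u y ≤ u p * u q := by
  have slide := lc_slide h0 hlc hsupp
  have core : ∀ m : ℕ, ∀ x y p q : ℤ, x + y = p + q → x ≤ p → p ≤ q → p = x + m →
      u x * u y ≤ u p * u q := by
    intro m
    induction m with
    | zero =>
      intro x y p q hs hxp hpq hm
      have hpx : p = x := by omega
      have hqy : q = y := by omega
      subst hpx; subst hqy; exact le_rfl
    | succ m ih =>
      intro x y p q hs hxp hpq hm
      have hx : x < p := by omega
      have hstep : u x * u y ≤ u (x + 1) * u (y - 1) := by
        have := slide (x + 1) y (by omega)
        have e : x + 1 - 1 = x := by ring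
        rwa [e] at this
      exact hstep.trans (ih (x + 1) (y - 1) p q (by omega) (by omega) hpq (by omega))
  intro x y p q hs hp hq
  rcases le_total x y with hxy | hxy <;> rcases le_total p q with hpq | hpq
  · exact core (p - x).toNat x y p q hs (by omega) hpq (by omega)
  · exact (core (q - x).toNat x y q p (by omega) (by omega) hpq (by omega)).trans_eq
      (mul_comm _ _)
  · exact ((mul_comm (u x) (u y)).le).trans
      (core (p - y).toNat y x p q (by omega) (by omega) hpq (by omega))
  · exact ((mul_comm (u x) (u y)).le).trans
      ((core (q - y).toNat y x q p (by omega) (by omega) hpq (by omega)).trans_eq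
        (mul_comm _ _))

/-! ### Modified weights absorbing the strict monotonicity constraint -/

/-- Interaction with the hard-core constraint `d > 0` absorbed. -/
def Qp (n : ℕ) (Q : Fin n → Fin n → ℤ → ℝ) (i j : Fin n) (d : ℤ) : ℝ :=
  if 0 < d then Q i j d else 0

/-- The ensemble weight with the strict-monotonicity indicator absorbed. -/
def Vw (n : ℕ) (w : Fin n → ℤ → ℝ) (Q : Fin n → Fin n → ℤ → ℝ) (h : Fin n → ℤ) : ℝ :=
  (∏ i : Fin n, ∏ j : Fin n, if i < j then Qp n Q i j (h j - h i) else 1) *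
    ∏ j : Fin n, w j (h j)

section VwLemmas

variable {n : ℕ} {w : Fin n → ℤ → ℝ} {Q : Fin n → Fin n → ℤ → ℝ}

lemma Qp_fac_nonneg (hQ0 : ∀ i j : Fin n, i < j → ∀ k, 0 ≤ Q i j k) :
    ∀ (i j : Fin n) (d : ℤ), 0 ≤ (if i < j then Qp n Q i j d else 1) := by
  intro i j d
  by_cases hij : i < j
  · rw [if_pos hij]
    unfold Qp
    by_cases hd : 0 < d
    · rw [if_pos hd]; exact hQ0 i j hij d
    · rw [if_neg hd]
  · rw [if_neg hij]; exact zero_le_one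

lemma Vw_nonneg (hw0 : ∀ j k, 0 ≤ w j k) (hQ0 : ∀ i j : Fin n, i < j → ∀ k, 0 ≤ Q i j k)
    (h : Fin n → ℤ) : 0 ≤ Vw n w Q h :=
  mul_nonneg
    (Finset.prod_nonneg fun _ _ => Finset.prod_nonneg fun _ _ => Qp_fac_nonneg hQ0 _ _ _)
    (Finset.prod_nonneg fun _ _ => hw0 _ _)

/-- `Vw` is the indicator of strictly monotone configurations times `ensembleWeight`. -/
lemma Vw_eq_indicator (h : Fin n → ℤ) :
    Vw n w Q h = Set.indicator {g : Fin n → ℤ | StrictMono g} (ensembleWeight n w Q) h := by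
  by_cases hsm : StrictMono h
  · rw [Set.indicator_of_mem (show h ∈ {g : Fin n → ℤ | StrictMono g} from hsm)]
    unfold Vw ensembleWeight
    congr 1
    refine Finset.prod_congr rfl fun i' _ => Finset.prod_congr rfl fun j' _ => ?_
    by_cases hij : i' < j'
    · rw [if_pos hij, if_pos hij]
      unfold Qp
      rw [if_pos (sub_pos.mpr (hsm hij))]
    · rw [if_neg hij, if_neg hij]
  · rw [Set.indicator_of_notMem (show h ∉ {g : Fin n → ℤ | StrictMono g} from hsm)]
    unfold Vw
    obtain ⟨i', j', hij, hle⟩ : ∃ i' j' : Fin n, i' < j' ∧ h j' ≤ h i' := by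
      by_contra hc
      push_neg at hc
      exact hsm fun a b hab => hc a b hab
    have hz : (∏ i : Fin n, ∏ j : Fin n, if i < j then Qp n Q i j (h j - h i) else 1) = 0 := by
      refine Finset.prod_eq_zero (Finset.mem_univ i') ?_
      refine Finset.prod_eq_zero (Finset.mem_univ j') ?_
      rw [if_pos hij]
      unfold Qp
      rw [if_neg (by omega)]
    rw [hz, zero_mul]

/-- The key pointwise lattice inequality for `Vw`. -/
lemma Vw_key
    (hw0 : ∀ j k, 0 ≤ w j k)
    (hQ0 : ∀ i j : Fin n, i < j → ∀ k, 0 ≤ Q i j k)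
    (hwlc : ∀ (j : Fin n) (k : ℤ), w j (k - 1) * w j (k + 1) ≤ (w j k) ^ 2)
    (hwsupp : ∀ (j : Fin n) (k₁ k₂ k₃ : ℤ), k₁ ≤ k₂ → k₂ ≤ k₃ →
      0 < w j k₁ → 0 < w j k₃ → 0 < w j k₂)
    (hQlc : ∀ i j : Fin n, i < j → ∀ k : ℤ,
      Q i j (k - 1) * Q i j (k + 1) ≤ (Q i j k) ^ 2)
    (hQsupp : ∀ i j : Fin n, i < j → ∀ k₁ k₂ k₃ : ℤ, k₁ ≤ k₂ → k₂ ≤ k₃ →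
      0 < Q i j k₁ → 0 < Q i j k₃ → 0 < Q i j k₂)
    (a b : Fin n → ℤ) :
    Vw n w Q (a - 1) * Vw n w Q b ≤ Vw n w Q (a ⊓ b) * Vw n w Q (a ⊔ b - 1) := by
  -- properties of Qp
  have hQp0 : ∀ (i j : Fin n), i < j → ∀ d, 0 ≤ Qp n Q i j d := by
    intro i j hij d
    unfold Qp; split
    · exact hQ0 i j hij d
    · exact le_rfl
  have hQplc : ∀ (i j : Fin n), i < j → ∀ d : ℤ,
      Qp n Q i j (d - 1) * Qp n Q i j (d + 1) ≤ (Qp n Q i j d) ^ 2 := by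
    intro i j hij d
    unfold Qp
    by_cases h1 : 0 < d - 1
    · rw [if_pos h1, if_pos (by omega : (0:ℤ) < d + 1), if_pos (by omega : (0:ℤ) < d)]
      exact hQlc i j hij d
    · rw [if_neg h1, zero_mul]
      positivity
  have hQpsupp : ∀ (i j : Fin n), i < j → ∀ k₁ k₂ k₃ : ℤ, k₁ ≤ k₂ → k₂ ≤ k₃ →
      0 < Qp n Q i j k₁ → 0 < Qp n Q i j k₃ → 0 < Qp n Q i j k₂ := by
    intro i j hij k₁ k₂ k₃ h12 h23 p1 p3
    unfold Qp at p1 p3 ⊢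
    have hk1 : 0 < k₁ := by
      by_contra hk
      rw [if_neg hk] at p1
      exact lt_irrefl _ p1
    rw [if_pos hk1] at p1
    rw [if_pos (by omega : (0:ℤ) < k₃)] at p3
    rw [if_pos (by omega : (0:ℤ) < k₂)]
    exact hQsupp i j hij k₁ k₂ k₃ h12 h23 p1 p3
  -- the two product inequalities
  have hB : (∏ j : Fin n, w j ((a - 1) j)) * (∏ j : Fin n, w j (b j)) ≤
      (∏ j : Fin n, w j ((a ⊓ b) j)) * ∏ j : Fin n, w j ((a ⊔ b - 1) j) := by
    rw [← Finset.prod_mul_distrib, ← Finset.prod_mul_distrib]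
    refine Finset.prod_le_prod (fun j _ => mul_nonneg (hw0 _ _) (hw0 _ _)) (fun j _ => ?_)
    have e1 : (a - 1) j = a j - 1 := rfl
    have e2 : (a ⊓ b) j = min (a j) (b j) := rfl
    have e3 : (a ⊔ b - 1) j = max (a j) (b j) - 1 := rfl
    rw [e1, e2, e3]
    exact lc_rebracket (hw0 j) (hwlc j) (hwsupp j) _ _ _ _ (by omega) (by omega) (by omega)
  have hA : (∏ i : Fin n, ∏ j : Fin n, if i < j then Qp n Q i j ((a - 1) j - (a - 1) i) else 1) *
        (∏ i : Fin n, ∏ j : Fin n, if i < j then Qp n Q i j (b j - b i) else 1) ≤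
      (∏ i : Fin n, ∏ j : Fin n, if i < j then Qp n Q i j ((a ⊓ b) j - (a ⊓ b) i) else 1) *
        (∏ i : Fin n, ∏ j : Fin n, if i < j then Qp n Q i j ((a ⊔ b - 1) j - (a ⊔ b - 1) i) else 1) := by
    simp only [← Finset.prod_mul_distrib]
    refine Finset.prod_le_prod
      (fun i _ => Finset.prod_nonneg fun j _ =>
        mul_nonneg (Qp_fac_nonneg hQ0 _ _ _) (Qp_fac_nonneg hQ0 _ _ _))
      (fun i _ => Finset.prod_le_prod
        (fun j _ => mul_nonneg (Qp_fac_nonneg hQ0 _ _ _) (Qp_fac_nonneg hQ0 _ _ _))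
        (fun j _ => ?_))
    by_cases hij : i < j
    · simp only [if_pos hij]
      have e1 : (a - 1) j - (a - 1) i = a j - a i := by
        show (a j - 1) - (a i - 1) = a j - a i; ring
      have e2 : (a ⊓ b) j - (a ⊓ b) i = min (a j) (b j) - min (a i) (b i) := rfl
      have e3 : (a ⊔ b - 1) j - (a ⊔ b - 1) i = (max (a j) (b j) - 1) - (max (a i) (b i) - 1) := rfl
      rw [e1, e2, e3]
      exact lc_rebracket (hQp0 i j hij) (hQplc i j hij) (hQpsupp i j hij)
        _ _ _ _ (by omega) (by omega) (by omega)
    · simp only [if_neg hij]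
      norm_num
  -- combine
  have hBnn : ∀ c : Fin n → ℤ, 0 ≤ ∏ j : Fin n, w j (c j) :=
    fun c => Finset.prod_nonneg fun _ _ => hw0 _ _
  have hAnn : ∀ c : Fin n → ℤ,
      0 ≤ ∏ i : Fin n, ∏ j : Fin n, if i < j then Qp n Q i j (c j - c i) else 1 :=
    fun c => Finset.prod_nonneg fun _ _ => Finset.prod_nonneg fun _ _ => Qp_fac_nonneg hQ0 _ _ _
  have key := mul_le_mul hA hB (mul_nonneg (hBnn _) (hBnn _)) (mul_nonneg (hAnn _) (hAnn _))
  unfold Vw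
  refine le_trans (le_of_eq (by ring)) (le_trans key (le_of_eq (by ring)))

end VwLemmas

/-! ### Ahlswede–Daykin inequality for infinite sums -/

lemma ad_tsum {α : Type*} [DistribLattice α] (f₁ f₂ f₃ f₄ : α → ℝ)
    (h₁ : ∀ a, 0 ≤ f₁ a) (h₂ : ∀ a, 0 ≤ f₂ a) (h₃ : ∀ a, 0 ≤ f₃ a) (h₄ : ∀ a, 0 ≤ f₄ a)
    (hm : ∀ a b, f₁ a * f₂ b ≤ f₃ (a ⊓ b) * f₄ (a ⊔ b))
    (s₁ : Summable f₁) (s₂ : Summable f₂) (s₃ : Summable f₃) (s₄ : Summable f₄) :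
    (∑' a, f₁ a) * ∑' a, f₂ a ≤ (∑' a, f₃ a) * ∑' a, f₄ a := by
  classical
  set C := (∑' a, f₃ a) * ∑' a, f₄ a with hCdef
  have hC0 : 0 ≤ C := mul_nonneg (tsum_nonneg h₃) (tsum_nonneg h₄)
  have hfin : ∀ s t : Finset α, (∑ a ∈ s, f₁ a) * ∑ a ∈ t, f₂ a ≤ C := by
    intro s t
    refine (four_functions_theorem f₁ f₂ f₃ f₄ (fun a => h₁ a) (fun a => h₂ a)
      (fun a => h₃ a) (fun a => h₄ a) hm s t).trans ?_
    exact mul_le_mul (Summable.sum_le_tsum _ (fun a _ => h₃ a) s₃) (Summable.sum_le_tsum _ (fun a _ => h₄ a) s₄)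
      (Finset.sum_nonneg fun a _ => h₄ a) (tsum_nonneg h₃)
  have step1 : ∀ s : Finset α, (∑ a ∈ s, f₁ a) * ∑' a, f₂ a ≤ C := by
    intro s
    rcases (Finset.sum_nonneg fun a _ => h₁ a : (0:ℝ) ≤ ∑ a ∈ s, f₁ a).eq_or_lt with hz | hp
    · rw [← hz, zero_mul]; exact hC0
    · have h2 : ∑' a, f₂ a ≤ C / (∑ a ∈ s, f₁ a) := by
        refine Summable.tsum_le_of_sum_le s₂ fun t => ?_
        rw [le_div_iff₀ hp, mul_comm]
        exact hfin s t
      calc (∑ a ∈ s, f₁ a) * ∑' a, f₂ a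
          ≤ (∑ a ∈ s, f₁ a) * (C / (∑ a ∈ s, f₁ a)) := by
            exact mul_le_mul_of_nonneg_left h2 hp.le
        _ = C := mul_div_cancel₀ C hp.ne'
  rcases (tsum_nonneg h₂ : (0:ℝ) ≤ ∑' a, f₂ a).eq_or_lt with hz | hp
  · rw [← hz, mul_zero]; exact hC0
  · have h1 : ∑' a, f₁ a ≤ C / (∑' a, f₂ a) :=
      Summable.tsum_le_of_sum_le s₁ fun s => (le_div_iff₀ hp).2 (step1 s)
    calc (∑' a, f₁ a) * ∑' a, f₂ a ≤ (C / ∑' a, f₂ a) * ∑' a, f₂ a :=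
        mul_le_mul_of_nonneg_right h1 hp.le
      _ = C := div_mul_cancel₀ C hp.ne'

/-- If all the weights `w_j` and interactions `Q_{i,j}` (for `i < j`) are nonnegative
log-concave sequences on ℤ (log-concavity inequality plus no internal zeros), and the
ensemble `P_{n,w,Q}` is well defined (finite, positive normalizing constant), then the
distribution of each coordinate `h_i` is log-concave. -/
theorem logConcave_marginal_discrete_ensemble
    (n : ℕ) (hn : 1 ≤ n) (w : Fin n → ℤ → ℝ) (Q : Fin n → Fin n → ℤ → ℝ)
    (hw0 : ∀ j k, 0 ≤ w j k)
    (hQ0 : ∀ i j : Fin n, i < j → ∀ k, 0 ≤ Q i j k)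
    (hwlc : ∀ (j : Fin n) (k : ℤ), w j (k - 1) * w j (k + 1) ≤ (w j k) ^ 2)
    (hwsupp : ∀ (j : Fin n) (k₁ k₂ k₃ : ℤ), k₁ ≤ k₂ → k₂ ≤ k₃ →
      0 < w j k₁ → 0 < w j k₃ → 0 < w j k₂)
    (hQlc : ∀ i j : Fin n, i < j → ∀ k : ℤ,
      Q i j (k - 1) * Q i j (k + 1) ≤ (Q i j k) ^ 2)
    (hQsupp : ∀ i j : Fin n, i < j → ∀ k₁ k₂ k₃ : ℤ, k₁ ≤ k₂ → k₂ ≤ k₃ →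
      0 < Q i j k₁ → 0 < Q i j k₃ → 0 < Q i j k₂)
    (hsum : Summable (fun h : {h : Fin n → ℤ // StrictMono h} => ensembleWeight n w Q h.1))
    (hZ : 0 < ∑' h : {h : Fin n → ℤ // StrictMono h}, ensembleWeight n w Q h.1) :
    ∀ (i : Fin n) (k : ℤ),
      ensembleProb n w Q i (k - 1) * ensembleProb n w Q i (k + 1) ≤
        (ensembleProb n w Q i k) ^ 2 := by
  intro i k
  classical
  have hV0 : ∀ h, 0 ≤ Vw n w Q h := Vw_nonneg hw0 hQ0
  -- summability of `Vw`
  have hsumV : Summable (Vw n w Q) := by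
    have hind : Summable (Set.indicator {g : Fin n → ℤ | StrictMono g} (ensembleWeight n w Q)) := by
      rw [← summable_subtype_iff_indicator]
      exact hsum
    rwa [funext (Vw_eq_indicator (w := w) (Q := Q))]
  -- probability-weight functions
  set g : ℤ → (Fin n → ℤ) → ℝ := fun m h => if h i = m then Vw n w Q h else 0 with hgdef
  set gs : ℤ → (Fin n → ℤ) → ℝ := fun m a => if a i = m then Vw n w Q (a - 1) else 0 with hgsdef
  have hg0 : ∀ m h, 0 ≤ g m h := by
    intro m h; simp only [hgdef]; split
    · exact hV0 h
    · exact le_rfl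
  have hgs0 : ∀ m a, 0 ≤ gs m a := by
    intro m a; simp only [hgsdef]; split
    · exact hV0 _
    · exact le_rfl
  have hgsum : ∀ m, Summable (g m) := by
    intro m
    refine Summable.of_nonneg_of_le (hg0 m) (fun h => ?_) hsumV
    simp only [hgdef]; split
    · exact le_rfl
    · exact hV0 h
  have hsumVs : Summable (fun a : Fin n → ℤ => Vw n w Q (a - 1)) :=
    hsumV.comp_injective (Equiv.subRight (1 : Fin n → ℤ)).injective
  have hgssum : ∀ m, Summable (gs m) := by
    intro m
    refine Summable.of_nonneg_of_le (hgs0 m) (fun a => ?_) hsumVs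
    simp only [hgsdef]; split
    · exact le_rfl
    · exact hV0 _
  -- identification of the marginal sums
  have hgS : ∀ m : ℤ,
      (∑' h : {h : Fin n → ℤ // StrictMono h ∧ h i = m}, ensembleWeight n w Q h.1) =
        ∑' h : Fin n → ℤ, g m h := by
    intro m
    refine Eq.trans (tsum_subtype {h : Fin n → ℤ | StrictMono h ∧ h i = m}
      (ensembleWeight n w Q)) (tsum_congr fun h => ?_)
    by_cases h1 : StrictMono h ∧ h i = m
    · rw [Set.indicator_of_mem
        (show h ∈ {h : Fin n → ℤ | StrictMono h ∧ h i = m} from h1)]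
      simp only [hgdef]
      rw [if_pos h1.2, Vw_eq_indicator,
        Set.indicator_of_mem (show h ∈ {g : Fin n → ℤ | StrictMono g} from h1.1)]
    · rw [Set.indicator_of_notMem
        (show h ∉ {h : Fin n → ℤ | StrictMono h ∧ h i = m} from h1)]
      simp only [hgdef]
      by_cases h2 : h i = m
      · have hns : ¬ StrictMono h := fun hs => h1 ⟨hs, h2⟩
        rw [if_pos h2, Vw_eq_indicator,
          Set.indicator_of_notMem (show h ∉ {g : Fin n → ℤ | StrictMono g} from hns)]
      · rw [if_neg h2]
  have hshift : ∀ m : ℤ, (∑' a : Fin n → ℤ, gs m a) = ∑' h : Fin n → ℤ, g (m - 1) h := by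
    intro m
    rw [← Equiv.tsum_eq (Equiv.addRight (1 : Fin n → ℤ)) (gs m)]
    refine tsum_congr fun h => ?_
    have e0 : (Equiv.addRight (1 : Fin n → ℤ)) h = h + 1 := rfl
    simp only [hgsdef, hgdef, e0]
    have e2 : h + 1 - 1 = h := add_sub_cancel_right h 1
    have e3 : (h + 1) i = h i + 1 := rfl
    rw [e2, e3]
    exact if_congr (by omega) rfl rfl
  -- the Ahlswede–Daykin step
  have hm : ∀ a b : Fin n → ℤ, gs k a * g (k + 1) b ≤ g k (a ⊓ b) * gs (k + 1) (a ⊔ b) := by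
    intro a b
    by_cases ha : a i = k
    · by_cases hb : b i = k + 1
      · have hinf : (a ⊓ b) i = k := by
          have e : (a ⊓ b) i = min (a i) (b i) := rfl
          rw [e, ha, hb]; omega
        have hsup : (a ⊔ b) i = k + 1 := by
          have e : (a ⊔ b) i = max (a i) (b i) := rfl
          rw [e, ha, hb]; omega
        simp only [hgdef, hgsdef]
        rw [if_pos ha, if_pos hb, if_pos hinf, if_pos hsup]
        exact Vw_key hw0 hQ0 hwlc hwsupp hQlc hQsupp a b
      · have hb' : g (k + 1) b = 0 := by simp only [hgdef]; rw [if_neg hb]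
        rw [hb', mul_zero]
        exact mul_nonneg (hg0 _ _) (hgs0 _ _)
    · have ha' : gs k a = 0 := by simp only [hgsdef]; rw [if_neg ha]
      rw [ha', zero_mul]
      exact mul_nonneg (hg0 _ _) (hgs0 _ _)
  have main : (∑' a, gs k a) * (∑' b, g (k + 1) b) ≤
      (∑' c, g k c) * (∑' d, gs (k + 1) d) :=
    ad_tsum (gs k) (g (k + 1)) (g k) (gs (k + 1)) (hgs0 k) (hg0 (k + 1)) (hg0 k)
      (hgs0 (k + 1)) hm (hgssum k) (hgsum (k + 1)) (hgsum k) (hgssum (k + 1))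
  -- translate back
  have hS1 : (∑' h : {h : Fin n → ℤ // StrictMono h ∧ h i = k - 1}, ensembleWeight n w Q h.1) =
      ∑' a, gs k a := by rw [hgS (k - 1), hshift k]
  have hS2 : (∑' h : {h : Fin n → ℤ // StrictMono h ∧ h i = k + 1}, ensembleWeight n w Q h.1) =
      ∑' b, g (k + 1) b := hgS (k + 1)
  have hS3 : (∑' h : {h : Fin n → ℤ // StrictMono h ∧ h i = k}, ensembleWeight n w Q h.1) =
      ∑' c, g k c := hgS k
  have hS4 : (∑' h : {h : Fin n → ℤ // StrictMono h ∧ h i = k}, ensembleWeight n w Q h.1) =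
      ∑' d, gs (k + 1) d := by rw [hshift (k + 1), hgS k]; norm_num
  have hmain : (∑' h : {h : Fin n → ℤ // StrictMono h ∧ h i = k - 1}, ensembleWeight n w Q h.1) *
      (∑' h : {h : Fin n → ℤ // StrictMono h ∧ h i = k + 1}, ensembleWeight n w Q h.1) ≤
      (∑' h : {h : Fin n → ℤ // StrictMono h ∧ h i = k}, ensembleWeight n w Q h.1) ^ 2 := by
    rw [hS1, hS2, sq]
    calc (∑' a, gs k a) * (∑' b, g (k + 1) b)
        ≤ (∑' c, g k c) * (∑' d, gs (k + 1) d) := main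
      _ = (∑' h : {h : Fin n → ℤ // StrictMono h ∧ h i = k}, ensembleWeight n w Q h.1) *
          (∑' h : {h : Fin n → ℤ // StrictMono h ∧ h i = k}, ensembleWeight n w Q h.1) := by
          rw [← hS3, ← hS4]
  -- conclude for the normalized probabilities
  unfold ensembleProb
  rw [div_mul_div_comm, div_pow]
  rw [div_le_div_iff₀ (by positivity) (by positivity)]
  calc (∑' h : {h : Fin n → ℤ // StrictMono h ∧ h i = k - 1}, ensembleWeight n w Q h.1) *
        (∑' h : {h : Fin n → ℤ // StrictMono h ∧ h i = k + 1}, ensembleWeight n w Q h.1) *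
        ((∑' h : {h : Fin n → ℤ // StrictMono h}, ensembleWeight n w Q h.1) ^ 2)
      ≤ (∑' h : {h : Fin n → ℤ // StrictMono h ∧ h i = k}, ensembleWeight n w Q h.1) ^ 2 *
        ((∑' h : {h : Fin n → ℤ // StrictMono h}, ensembleWeight n w Q h.1) ^ 2) :=
        mul_le_mul_of_nonneg_right hmain (by positivity)
    _ = (∑' h : {h : Fin n → ℤ // StrictMono h ∧ h i = k}, ensembleWeight n w Q h.1) ^ 2 *
        ((∑' h : {h : Fin n → ℤ // StrictMono h}, ensembleWeight n w Q h.1) *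
          (∑' h : {h : Fin n → ℤ // StrictMono h}, ensembleWeight n w Q h.1)) := by ring
end
end

section
/- Let n ≥ 1, let Q_{i,j} : ℤ → [0,∞) (1 ≤ i < j ≤ n) be log-concave sequences, and let w_1, …, w_n : ℕ → [0,∞) be ultra-log-concave sequences (extended by 0 to negative integers). Assume the discrete ensemble P_{n,w,Q} is well defined. Then for every i ∈ {1, …, n}, the probability mass function k ↦ P_{n,w,Q}(h_i = k) is an ultra-log-concave sequence on ℕ. -/
open scoped BigOperators

noncomputable section

/-!
Split the weight as `w i (h i) · W'(h)`, where `W'` drops the factor `w i`. A log-concave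
sequence satisfies `a s · a t ≤ a u · a v` whenever `s ≤ u ≤ t` and `s + t = u + v`; hence every
factor of `W'`, and the indicator of strictly increasing tuples, satisfies the shifted lattice
condition `F (p + α) F q ≤ F (p ⊔ q) F (p ⊓ q + α)` for constant shifts `α ≥ 0`. With `α = 1`,
the four functions theorem applied to the slices `h i = κ` and `h i = κ + 1` shows that the
marginal `κ ↦ ∑_{h i = κ} W'(h)` is log-concave, and multiplying by the ultra-log-concave `w i`
gives ultra-log-concavity of the law of `h i`. With `α = k₃ - k₂` the lattice condition turns
configurations with `h i = k₁` and `h i = k₃` into one with `h i = k₂`, so there are no internal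
zeros.
-/

structure IntLogConcave (a : ℤ → ℝ) : Prop where
  nonneg : ∀ k, 0 ≤ a k
  mul_le_sq : ∀ k, a (k - 1) * a (k + 1) ≤ a k ^ 2
  pos_of_le_of_le : ∀ ⦃s u t : ℤ⦄, s ≤ u → u ≤ t → 0 < a s → 0 < a t → 0 < a u

lemma intLogConcave_one : IntLogConcave 1 where
  nonneg _ := zero_le_one
  mul_le_sq _ := by simp
  pos_of_le_of_le _ _ _ _ _ _ _ := zero_lt_one

namespace IntLogConcave

variable {a : ℤ → ℝ}

lemma mul_le_mul_add_one (ha : IntLogConcave a) {x y : ℤ} (hxy : x ≤ y) (hx : 0 < a x)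
    (hy : 0 < a (y + 1)) :
    a (y + 1) * a x ≤ a (x + 1) * a y := by
  induction y, hxy using Int.leInduction with
  | base => rw [mul_comm]
  | succ y hxy ih =>
    have hy₁ : 0 < a (y + 1) := ha.pos_of_le_of_le (by omega) (by omega) hx hy
    have hy₀ : 0 < a y := ha.pos_of_le_of_le hxy (by omega) hx hy₁
    have hlc := ha.mul_le_sq (y + 1)
    rw [add_sub_cancel_right] at hlc
    refine le_of_mul_le_mul_left ?_ hy₀
    calc a y * (a (y + 1 + 1) * a x) = a y * a (y + 1 + 1) * a x := by ring
      _ ≤ a (y + 1) ^ 2 * a x := mul_le_mul_of_nonneg_right hlc (ha.nonneg x)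
      _ = a (y + 1) * (a (y + 1) * a x) := by ring
      _ ≤ a (y + 1) * (a (x + 1) * a y) := mul_le_mul_of_nonneg_left (ih hy₁) (ha.nonneg _)
      _ = a y * (a (x + 1) * a (y + 1)) := by ring

lemma mul_le_mul_add (ha : IntLogConcave a) {x y d : ℤ} (hxy : x ≤ y) (hd : 0 ≤ d) (hx : 0 < a x)
    (hy : 0 < a (y + d)) : a (y + d) * a x ≤ a (x + d) * a y := by
  induction d, hd using Int.leInduction with
  | base => simp only [add_zero, mul_comm, le_refl]
  | succ d hd ih =>
    rw [← add_assoc] at hy ⊢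
    rw [← add_assoc]
    have hxd : 0 < a (x + d) := ha.pos_of_le_of_le (by omega) (by omega) hx hy
    have hyd : 0 < a (y + d) := ha.pos_of_le_of_le (by omega) (by omega) hx hy
    have hstep := ha.mul_le_mul_add_one (x := x + d) (y := y + d) (by omega) hxd hy
    refine le_of_mul_le_mul_left ?_ hxd
    calc a (x + d) * (a (y + d + 1) * a x) = a (y + d + 1) * a (x + d) * a x := by ring
      _ ≤ a (x + d + 1) * a (y + d) * a x := mul_le_mul_of_nonneg_right hstep (ha.nonneg x)
      _ = a (x + d + 1) * (a (y + d) * a x) := by ring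
      _ ≤ a (x + d + 1) * (a (x + d) * a y) :=
        mul_le_mul_of_nonneg_left (ih hyd) (ha.nonneg _)
      _ = a (x + d) * (a (x + d + 1) * a y) := by ring

lemma mul_le_mul_of_min_le_of_le_max (ha : IntLogConcave a) {p q u v : ℤ} (hu₁ : min p q ≤ u)
    (hu₂ : u ≤ max p q) (h : p + q = u + v) : a p * a q ≤ a u * a v := by
  wlog hpq : p ≤ q generalizing p q
  · rw [mul_comm]
    exact this (by rwa [min_comm]) (by rwa [max_comm]) (by omega) (by omega)
  rw [min_eq_left hpq] at hu₁
  rw [max_eq_right hpq] at hu₂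
  rcases (ha.nonneg p).eq_or_lt with hp | hp
  · rw [← hp, zero_mul]
    exact mul_nonneg (ha.nonneg u) (ha.nonneg v)
  rcases (ha.nonneg q).eq_or_lt with hq | hq
  · rw [← hq, mul_zero]
    exact mul_nonneg (ha.nonneg u) (ha.nonneg v)
  have hvq : v + (u - p) = q := by omega
  have key := ha.mul_le_mul_add (y := v) (d := u - p) (by omega) (by omega) hp (by rwa [hvq])
  rwa [hvq, add_sub_cancel, mul_comm] at key

end IntLogConcave

def UltraLogConcaveAt (a : ℤ → ℝ) (k : ℕ) : Prop :=
  ((Nat.factorial k : ℝ) * a (k : ℤ)) * ((Nat.factorial (k + 2) : ℝ) * a ((k : ℤ) + 2)) ≤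
    ((Nat.factorial (k + 1) : ℝ) * a ((k : ℤ) + 1)) ^ 2

namespace UltraLogConcaveAt

variable {a : ℤ → ℝ} {k : ℕ}

lemma mul_le_sq (ha : UltraLogConcaveAt a k) : a k * a (k + 2) ≤ a (k + 1) ^ 2 := by
  have hfac : ((Nat.factorial (k + 1) : ℝ)) ^ 2 ≤ Nat.factorial k * Nat.factorial (k + 2) := by
    have := Nat.factorial_pos k
    simp only [Nat.factorial_succ, Nat.cast_mul]
    push_cast
    nlinarith
  have hpos : (0 : ℝ) < Nat.factorial k * Nat.factorial (k + 2) := by positivity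
  refine le_of_mul_le_mul_right ?_ hpos
  calc a k * a (k + 2) * (Nat.factorial k * Nat.factorial (k + 2))
      = (Nat.factorial k * a k) * (Nat.factorial (k + 2) * a (k + 2)) := by ring
    _ ≤ ((Nat.factorial (k + 1) : ℝ) * a (k + 1)) ^ 2 := ha
    _ = a (k + 1) ^ 2 * (Nat.factorial (k + 1) : ℝ) ^ 2 := by ring
    _ ≤ a (k + 1) ^ 2 * (Nat.factorial k * Nat.factorial (k + 2)) :=
      mul_le_mul_of_nonneg_left hfac (sq_nonneg _)

lemma mul (ha : UltraLogConcaveAt a k) {b : ℤ → ℝ} (ha₀ : ∀ κ, 0 ≤ a κ) (hb₀ : ∀ κ, 0 ≤ b κ)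
    (hb : a (k + 1) ≠ 0 → b k * b (k + 2) ≤ b (k + 1) ^ 2) :
    UltraLogConcaveAt (fun κ => a κ * b κ) k := by
  unfold UltraLogConcaveAt
  have hlhs : ((Nat.factorial k : ℝ) * (a k * b k)) *
      ((Nat.factorial (k + 2) : ℝ) * (a (k + 2) * b (k + 2))) =
        ((Nat.factorial k : ℝ) * a k * ((Nat.factorial (k + 2) : ℝ) * a (k + 2))) *
          (b k * b (k + 2)) := by ring
  have hrhs : ((Nat.factorial (k + 1) : ℝ) * (a (k + 1) * b (k + 1))) ^ 2 =
      ((Nat.factorial (k + 1) : ℝ) * a (k + 1)) ^ 2 * b (k + 1) ^ 2 := by ring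
  rw [hlhs, hrhs]
  by_cases hk : a (k + 1) = 0
  · have h₀ : (Nat.factorial k : ℝ) * a k * ((Nat.factorial (k + 2) : ℝ) * a (k + 2)) = 0 :=
      le_antisymm (ha.trans_eq (by simp [hk])) (by have := ha₀ k; have := ha₀ (k + 2); positivity)
    rw [h₀, zero_mul]
    positivity
  · exact mul_le_mul ha (hb hk) (mul_nonneg (hb₀ _) (hb₀ _)) (sq_nonneg _)

end UltraLogConcaveAt

lemma IntLogConcave.of_ultraLogConcaveAt {a : ℤ → ℝ} (h₀ : ∀ k, 0 ≤ a k)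
    (hneg : ∀ k : ℤ, k < 0 → a k = 0) (hulc : ∀ k : ℕ, UltraLogConcaveAt a k)
    (hsupp : ∀ k₁ k₂ k₃ : ℕ, k₁ ≤ k₂ → k₂ ≤ k₃ → 0 < a k₁ → 0 < a k₃ → 0 < a k₂) :
    IntLogConcave a where
  nonneg := h₀
  mul_le_sq k := by
    rcases lt_or_ge (k - 1) 0 with hk | hk
    · rw [hneg _ hk, zero_mul]
      positivity
    · obtain ⟨m, rfl⟩ : ∃ m : ℕ, k = m + 1 := ⟨(k - 1).toNat, by omega⟩
      simpa only [add_sub_cancel_right, add_assoc, one_add_one_eq_two] using (hulc m).mul_le_sq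
  pos_of_le_of_le s u t hsu hut hs ht := by
    lift s to ℕ using not_lt.1 fun h => hs.ne' (hneg _ h)
    lift u to ℕ using by omega
    lift t to ℕ using by omega
    exact hsupp s u t (by omega) (by omega) hs ht

section ShiftedLattice

variable {ι : Type*}

/-- For `α = 0` this is the FKG lattice condition (log-supermodularity) of `F` on `ι → ℤ`. -/
structure IsShiftedLogSupermodular (α : ℤ) (F : (ι → ℤ) → ℝ) : Prop where
  nonneg : ∀ p, 0 ≤ F p
  mul_le_mul : ∀ p q, F (p + fun _ => α) * F q ≤ F (p ⊔ q) * F (p ⊓ q + fun _ => α)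

lemma isShiftedLogSupermodular_one (α : ℤ) : IsShiftedLogSupermodular α (fun _ : ι → ℤ => 1) where
  nonneg _ := zero_le_one
  mul_le_mul _ _ := le_rfl

namespace IsShiftedLogSupermodular

variable {α : ℤ} {F G : (ι → ℤ) → ℝ}

lemma mul (hF : IsShiftedLogSupermodular α F) (hG : IsShiftedLogSupermodular α G) :
    IsShiftedLogSupermodular α (fun p => F p * G p) where
  nonneg p := mul_nonneg (hF.nonneg p) (hG.nonneg p)
  mul_le_mul p q := by
    rw [mul_mul_mul_comm, mul_mul_mul_comm (F (p ⊔ q))]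
    exact _root_.mul_le_mul (hF.mul_le_mul p q) (hG.mul_le_mul p q)
      (mul_nonneg (hG.nonneg _) (hG.nonneg _)) (mul_nonneg (hF.nonneg _) (hF.nonneg _))

lemma prod {κ : Type*} {s : Finset κ} {f : κ → (ι → ℤ) → ℝ}
    (hf : ∀ x ∈ s, IsShiftedLogSupermodular α (f x)) :
    IsShiftedLogSupermodular α (fun p => ∏ x ∈ s, f x p) := by
  rw [← Finset.prod_fn]
  exact Finset.prod_induction f _ (fun _ _ => mul) (isShiftedLogSupermodular_one α) hf

lemma indicator_strictMono [Preorder ι] (hF : IsShiftedLogSupermodular α F) :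
    IsShiftedLogSupermodular α ({p : ι → ℤ | StrictMono p}.indicator F) := by
  have hnn : ∀ p, 0 ≤ {p : ι → ℤ | StrictMono p}.indicator F p :=
    Set.indicator_nonneg fun p _ => hF.nonneg p
  refine ⟨hnn, fun p q => ?_⟩
  have hshift : ∀ r : ι → ℤ, StrictMono (r + fun _ => α) ↔ StrictMono r := fun r =>
    ⟨fun hr _ _ hxy => by simpa using hr hxy, fun hr _ _ hxy => by simpa using hr hxy⟩
  by_cases hpq : StrictMono p ∧ StrictMono q
  · obtain ⟨hp, hq⟩ := hpq
    have hsup : StrictMono (p ⊔ q) := fun _ _ hxy => max_lt_max (hp hxy) (hq hxy)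
    have hinf : StrictMono (p ⊓ q) := fun _ _ hxy => min_lt_min (hp hxy) (hq hxy)
    simp only [Set.indicator_of_mem, Set.mem_ofPred_eq, (hshift _).2, hp, hq, hsup, hinf]
    exact hF.mul_le_mul p q
  · rw [not_and_or, ← hshift] at hpq
    have hrhs := mul_nonneg (hnn (p ⊔ q)) (hnn (p ⊓ q + fun _ => α))
    rcases hpq with hp | hq
    · rwa [Set.indicator_of_notMem hp, zero_mul]
    · rwa [Set.indicator_of_notMem (show q ∉ {p : ι → ℤ | StrictMono p} from hq), mul_zero]

end IsShiftedLogSupermodular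

namespace IntLogConcave

variable {a : ℤ → ℝ}

lemma isShiftedLogSupermodular_comp_eval (ha : IntLogConcave a) {α : ℤ} (hα : 0 ≤ α) (j : ι) :
    IsShiftedLogSupermodular α (fun p => a (p j)) where
  nonneg _ := ha.nonneg _
  mul_le_mul p q := by
    simp only [Pi.add_apply, Pi.sup_apply, Pi.inf_apply]
    exact ha.mul_le_mul_of_min_le_of_le_max (by omega) (by omega) (by omega)

lemma isShiftedLogSupermodular_comp_sub (ha : IntLogConcave a) (α : ℤ) (i j : ι) :
    IsShiftedLogSupermodular α (fun p => a (p j - p i)) where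
  nonneg _ := ha.nonneg _
  mul_le_mul p q := by
    simp only [Pi.add_apply, Pi.sup_apply, Pi.inf_apply, add_sub_add_right_eq_sub]
    exact ha.mul_le_mul_of_min_le_of_le_max (by omega) (by omega) (by omega)

end IntLogConcave

end ShiftedLattice

lemma isShiftedLogSupermodular_ensembleWeight {n : ℕ} {w : Fin n → ℤ → ℝ}
    {Q : Fin n → Fin n → ℤ → ℝ} (hw : ∀ j, IntLogConcave (w j))
    (hQ : ∀ i j, i < j → IntLogConcave (Q i j)) {α : ℤ} (hα : 0 ≤ α) :
    IsShiftedLogSupermodular α (ensembleWeight n w Q) := by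
  refine IsShiftedLogSupermodular.mul
    (IsShiftedLogSupermodular.prod fun i _ => IsShiftedLogSupermodular.prod fun j _ => ?_)
    (IsShiftedLogSupermodular.prod fun j _ => (hw j).isShiftedLogSupermodular_comp_eval hα j)
  by_cases hij : i < j
  · simpa only [hij, if_true] using (hQ i j hij).isShiftedLogSupermodular_comp_sub α i j
  · simpa only [hij, if_false] using isShiftedLogSupermodular_one α

open Filter in
theorem tsum_mul_tsum_le_of_four_functions {α : Type*} [DistribLattice α] {f₁ f₂ f₃ f₄ : α → ℝ}
    (h₁ : 0 ≤ f₁) (h₂ : 0 ≤ f₂) (h₃ : 0 ≤ f₃) (h₄ : 0 ≤ f₄) (hs₃ : Summable f₃)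
    (hs₄ : Summable f₄) (h : ∀ a b, f₁ a * f₂ b ≤ f₃ (a ⊓ b) * f₄ (a ⊔ b)) :
    (∑' a, f₁ a) * ∑' a, f₂ a ≤ (∑' a, f₃ a) * ∑' a, f₄ a := by
  classical
  have hrhs : 0 ≤ (∑' a, f₃ a) * ∑' a, f₄ a := mul_nonneg (tsum_nonneg h₃) (tsum_nonneg h₄)
  by_cases hs₁ : Summable f₁
  swap
  · rwa [tsum_eq_zero_of_not_summable hs₁, zero_mul]
  by_cases hs₂ : Summable f₂
  swap
  · rwa [tsum_eq_zero_of_not_summable hs₂, mul_zero]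
  refine le_of_tendsto (Tendsto.mul hs₁.hasSum hs₂.hasSum) (Eventually.of_forall fun s => ?_)
  refine (four_functions_theorem f₁ f₂ f₃ f₄ h₁ h₂ h₃ h₄ h s s).trans ?_
  exact mul_le_mul (hs₃.sum_le_tsum _ fun a _ => h₃ a) (hs₄.sum_le_tsum _ fun a _ => h₄ a)
    (Finset.sum_nonneg fun a _ => h₄ a) (tsum_nonneg h₃)

section Marginal

variable {ι : Type*}

def marginal (F : (ι → ℤ) → ℝ) (i : ι) (κ : ℤ) : ℝ :=
  ∑' p, {p : ι → ℤ | p i = κ}.indicator F p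

variable {F : (ι → ℤ) → ℝ} {i : ι}

lemma indicator_eval_eq_comp_add (c κ : ℤ) :
    {p : ι → ℤ | p i = κ}.indicator (fun p => F (p + fun _ => c)) =
      fun p => {p : ι → ℤ | p i = κ + c}.indicator F (p + fun _ => c) := by
  ext p
  simp only [Set.indicator_apply, Set.mem_ofPred_eq, Pi.add_apply, add_left_inj]

lemma marginal_comp_add (c κ : ℤ) :
    marginal (fun p => F (p + fun _ => c)) i κ = marginal F i (κ + c) := by
  rw [marginal, indicator_eval_eq_comp_add]
  exact (Equiv.addRight _).tsum_eq ({p : ι → ℤ | p i = κ + c}.indicator F)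

lemma indicator_eval_mul (g : ℤ → ℝ) (κ : ℤ) :
    {p : ι → ℤ | p i = κ}.indicator (fun p => g (p i) * F p) =
      fun p => g κ * {p : ι → ℤ | p i = κ}.indicator F p := by
  ext p
  by_cases hp : p i = κ
  · simp only [Set.indicator_apply, Set.mem_ofPred_eq, hp, if_true]
  · simp only [Set.indicator_apply, Set.mem_ofPred_eq, hp, if_false, mul_zero]

lemma exists_ne_zero_of_marginal_ne_zero {κ : ℤ} (h : marginal F i κ ≠ 0) :
    ∃ p : ι → ℤ, p i = κ ∧ F p ≠ 0 := by
  by_contra! hF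
  exact h ((tsum_congr fun p => Set.indicator_apply_eq_zero.2 (hF p)).trans tsum_zero)

namespace IsShiftedLogSupermodular

lemma marginal_mul_le_sq (hF : IsShiftedLogSupermodular 1 F) (κ : ℤ)
    (hs : Summable ({p : ι → ℤ | p i = κ + 1}.indicator F)) :
    marginal F i κ * marginal F i (κ + 2) ≤ marginal F i (κ + 1) ^ 2 := by
  have hnn : ∀ (s : Set (ι → ℤ)) (G : (ι → ℤ) → ℝ), (∀ p, 0 ≤ G p) → 0 ≤ s.indicator G :=
    fun _ _ hG => Set.indicator_nonneg fun p _ => hG p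
  have hshift : Summable ({p : ι → ℤ | p i = κ}.indicator fun p => F (p + fun _ => 1)) := by
    rw [indicator_eval_eq_comp_add]
    exact (Equiv.addRight _).summable_iff (f := {p : ι → ℤ | p i = κ + 1}.indicator F) |>.2 hs
  have key : marginal (fun p => F (p + fun _ => 1)) i (κ + 1) * marginal F i κ ≤
      marginal (fun p => F (p + fun _ => 1)) i κ * marginal F i (κ + 1) := by
    refine tsum_mul_tsum_le_of_four_functions (hnn _ _ fun _ => hF.nonneg _)
      (hnn _ _ hF.nonneg) (hnn _ _ fun _ => hF.nonneg _) (hnn _ _ hF.nonneg) hshift hs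
      fun a b => ?_
    by_cases ha : a i = κ + 1
    · by_cases hb : b i = κ
      · have hinf : (a ⊓ b) i = κ := by simp only [Pi.inf_apply, ha, hb]; omega
        have hsup : (a ⊔ b) i = κ + 1 := by simp only [Pi.sup_apply, ha, hb]; omega
        simp only [Set.indicator_apply, Set.mem_ofPred_eq, ha, hb, hinf, hsup, if_true]
        exact (hF.mul_le_mul a b).trans_eq (mul_comm _ _)
      · rw [Set.indicator_of_notMem (show b ∉ {p : ι → ℤ | p i = κ} from hb), mul_zero]
        exact mul_nonneg (hnn _ _ (fun _ => hF.nonneg _) _) (hnn _ _ hF.nonneg _)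
    · rw [Set.indicator_of_notMem (show a ∉ {p : ι → ℤ | p i = κ + 1} from ha), zero_mul]
      exact mul_nonneg (hnn _ _ (fun _ => hF.nonneg _) _) (hnn _ _ hF.nonneg _)
  rw [marginal_comp_add, marginal_comp_add, add_assoc, one_add_one_eq_two] at key
  rw [sq, mul_comm]
  exact key

lemma marginal_pos_of_le_of_le {k₁ k₂ k₃ : ℤ} (hF : IsShiftedLogSupermodular (k₃ - k₂) F)
    (h₁₂ : k₁ ≤ k₂) (hs : Summable ({p : ι → ℤ | p i = k₂}.indicator F))
    (h₁ : 0 < marginal F i k₁) (h₃ : 0 < marginal F i k₃) : 0 < marginal F i k₂ := by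
  obtain ⟨q, hq, hFq⟩ := exists_ne_zero_of_marginal_ne_zero h₁.ne'
  obtain ⟨r, hr, hFr⟩ := exists_ne_zero_of_marginal_ne_zero h₃.ne'
  -- shift `r` down so that its `i`-th coordinate becomes `k₂`
  set p : ι → ℤ := r - fun _ => k₃ - k₂
  have hprod : 0 < F (p ⊔ q) * F (p ⊓ q + fun _ => k₃ - k₂) := by
    refine lt_of_lt_of_le ?_ (hF.mul_le_mul p q)
    rw [sub_add_cancel]
    exact mul_pos ((hF.nonneg r).lt_of_ne' hFr) ((hF.nonneg q).lt_of_ne' hFq)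
  have hi : (p ⊔ q) i = k₂ := by
    simp only [p, Pi.sup_apply, Pi.sub_apply, hr, hq]
    omega
  calc 0 < F (p ⊔ q) := pos_of_mul_pos_left hprod (hF.nonneg _)
    _ = {p : ι → ℤ | p i = k₂}.indicator F (p ⊔ q) :=
      (Set.indicator_of_mem (show p ⊔ q ∈ {p : ι → ℤ | p i = k₂} from hi) F).symm
    _ ≤ marginal F i k₂ :=
      hs.le_tsum _ fun _ _ => Set.indicator_nonneg (fun p _ => hF.nonneg p) _

end IsShiftedLogSupermodular

end Marginal

lemma ensembleWeight_eq_mul_update {n : ℕ} (w : Fin n → ℤ → ℝ) (Q : Fin n → Fin n → ℤ → ℝ)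
    (i : Fin n) (h : Fin n → ℤ) :
    ensembleWeight n w Q h = w i (h i) * ensembleWeight n (Function.update w i 1) Q h := by
  have hprod : ∏ j, w j (h j) = w i (h i) * ∏ j, Function.update w i 1 j (h j) := by
    rw [Fintype.prod_eq_mul_prod_compl i, Fintype.prod_eq_mul_prod_compl i,
      Function.update_self, Pi.one_apply, one_mul]
    congr 1
    refine Finset.prod_congr rfl fun j hj => ?_
    rw [Function.update_of_ne (by simpa using hj)]
  rw [ensembleWeight, ensembleWeight, hprod]
  ring

def reducedWeight (n : ℕ) (w : Fin n → ℤ → ℝ) (Q : Fin n → Fin n → ℤ → ℝ) (i : Fin n) :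
    (Fin n → ℤ) → ℝ :=
  {h : Fin n → ℤ | StrictMono h}.indicator (ensembleWeight n (Function.update w i 1) Q)

section ReducedWeight

variable {n : ℕ} {w : Fin n → ℤ → ℝ} {Q : Fin n → Fin n → ℤ → ℝ}

lemma isShiftedLogSupermodular_reducedWeight (hw : ∀ j, IntLogConcave (w j))
    (hQ : ∀ i j, i < j → IntLogConcave (Q i j)) (i : Fin n) {α : ℤ} (hα : 0 ≤ α) :
    IsShiftedLogSupermodular α (reducedWeight n w Q i) := by
  refine (isShiftedLogSupermodular_ensembleWeight (fun j => ?_) hQ hα).indicator_strictMono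
  rcases eq_or_ne j i with rfl | hj
  · simpa using intLogConcave_one
  · simpa [hj] using hw j

lemma indicator_eval_indicator_strictMono (i : Fin n) (κ : ℤ) :
    {h : Fin n → ℤ | h i = κ}.indicator
        ({h : Fin n → ℤ | StrictMono h}.indicator (ensembleWeight n w Q)) =
      fun h => w i κ * {h : Fin n → ℤ | h i = κ}.indicator (reducedWeight n w Q i) h := by
  rw [← indicator_eval_mul]
  congr 1
  ext h
  rw [funext (ensembleWeight_eq_mul_update w Q i)]
  exact Set.indicator_mul_right _ _ _

lemma ensembleProb_eq_mul_marginal_div (i : Fin n) (κ : ℤ) :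
    ensembleProb n w Q i κ = w i κ * (marginal (reducedWeight n w Q i) i κ /
      ∑' h : {h : Fin n → ℤ // StrictMono h}, ensembleWeight n w Q h.1) := by
  rw [ensembleProb, ← mul_div_assoc, marginal, ← tsum_mul_left,
    ← indicator_eval_indicator_strictMono, Set.indicator_indicator, Set.inter_comm,
    ← Set.ofPred_and]
  congr 1
  exact tsum_subtype {h : Fin n → ℤ | StrictMono h ∧ h i = κ} (ensembleWeight n w Q)

lemma summable_indicator_eval_reducedWeight
    (hsum : Summable fun h : {h : Fin n → ℤ // StrictMono h} => ensembleWeight n w Q h.1)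
    {i : Fin n} {κ : ℤ} (hκ : w i κ ≠ 0) :
    Summable ({h : Fin n → ℤ | h i = κ}.indicator (reducedWeight n w Q i)) := by
  have hsumW := (summable_subtype_iff_indicator (f := ensembleWeight n w Q)
    (s := {h : Fin n → ℤ | StrictMono h}) |>.1 hsum).indicator {h : Fin n → ℤ | h i = κ}
  rw [indicator_eval_indicator_strictMono] at hsumW
  exact (summable_mul_left_iff hκ).1 hsumW

end ReducedWeight

theorem ultraLogConcave_marginal_discrete_ensemble_general
    (n : ℕ) (w : Fin n → ℤ → ℝ) (Q : Fin n → Fin n → ℤ → ℝ)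
    (hw0 : ∀ j k, 0 ≤ w j k)
    (hwneg : ∀ (j : Fin n) (k : ℤ), k < 0 → w j k = 0)
    (hQ0 : ∀ i j : Fin n, i < j → ∀ k, 0 ≤ Q i j k)
    (hwulc : ∀ (j : Fin n) (k : ℕ),
      ((Nat.factorial k : ℝ) * w j (k : ℤ)) *
        ((Nat.factorial (k + 2) : ℝ) * w j ((k : ℤ) + 2)) ≤
      ((Nat.factorial (k + 1) : ℝ) * w j ((k : ℤ) + 1)) ^ 2)
    (hwsupp : ∀ (j : Fin n) (k₁ k₂ k₃ : ℕ), k₁ ≤ k₂ → k₂ ≤ k₃ →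
      0 < w j (k₁ : ℤ) → 0 < w j (k₃ : ℤ) → 0 < w j (k₂ : ℤ))
    (hQlc : ∀ i j : Fin n, i < j → ∀ k : ℤ,
      Q i j (k - 1) * Q i j (k + 1) ≤ (Q i j k) ^ 2)
    (hQsupp : ∀ i j : Fin n, i < j → ∀ k₁ k₂ k₃ : ℤ, k₁ ≤ k₂ → k₂ ≤ k₃ →
      0 < Q i j k₁ → 0 < Q i j k₃ → 0 < Q i j k₂)
    (hsum : Summable (fun h : {h : Fin n → ℤ // StrictMono h} => ensembleWeight n w Q h.1))
    (hZ : 0 < ∑' h : {h : Fin n → ℤ // StrictMono h}, ensembleWeight n w Q h.1) :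
    ∀ i : Fin n,
      (∀ k : ℕ,
        ((Nat.factorial k : ℝ) * ensembleProb n w Q i (k : ℤ)) *
          ((Nat.factorial (k + 2) : ℝ) * ensembleProb n w Q i ((k : ℤ) + 2)) ≤
        ((Nat.factorial (k + 1) : ℝ) * ensembleProb n w Q i ((k : ℤ) + 1)) ^ 2) ∧
      (∀ k₁ k₂ k₃ : ℕ, k₁ ≤ k₂ → k₂ ≤ k₃ →
        0 < ensembleProb n w Q i (k₁ : ℤ) → 0 < ensembleProb n w Q i (k₃ : ℤ) →
        0 < ensembleProb n w Q i (k₂ : ℤ)) := by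
  intro i
  have hw : ∀ j, IntLogConcave (w j) := fun j =>
    .of_ultraLogConcaveAt (hw0 j) (hwneg j) (hwulc j) (hwsupp j)
  have hF : ∀ α, 0 ≤ α → IsShiftedLogSupermodular α (reducedWeight n w Q i) := fun _ =>
    isShiftedLogSupermodular_reducedWeight hw
      (fun i j hij => ⟨hQ0 i j hij, hQlc i j hij, hQsupp i j hij⟩) i
  set Z := ∑' h : {h : Fin n → ℤ // StrictMono h}, ensembleWeight n w Q h.1
  set M := marginal (reducedWeight n w Q i) i
  have hM : ∀ κ, 0 ≤ M κ / Z := fun κ =>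
    div_nonneg (tsum_nonneg (Set.indicator_nonneg fun h _ => (hF 0 le_rfl).nonneg h)) hZ.le
  refine ⟨fun k => ?_, fun k₁ k₂ k₃ h₁₂ h₂₃ h₁ h₃ => ?_⟩
  · change UltraLogConcaveAt (ensembleProb n w Q i) k
    rw [funext (ensembleProb_eq_mul_marginal_div i)]
    refine UltraLogConcaveAt.mul (hwulc i k) (hw0 i) hM fun hk => ?_
    have hlc := (hF 1 zero_le_one).marginal_mul_le_sq k
      (summable_indicator_eval_reducedWeight hsum hk)
    calc M k / Z * (M (k + 2) / Z) = M k * M (k + 2) / Z ^ 2 := by ring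
      _ ≤ M (k + 1) ^ 2 / Z ^ 2 := by gcongr
      _ = (M (k + 1) / Z) ^ 2 := by ring
  · rw [ensembleProb_eq_mul_marginal_div] at h₁ h₃ ⊢
    have hw₂ : 0 < w i k₂ := (hw i).pos_of_le_of_le (by omega) (by omega)
      (pos_of_mul_pos_left h₁ (hM _)) (pos_of_mul_pos_left h₃ (hM _))
    have hM₁ := (div_pos_iff_of_pos_right hZ).1 (pos_of_mul_pos_right h₁ (hw0 i _))
    have hM₃ := (div_pos_iff_of_pos_right hZ).1 (pos_of_mul_pos_right h₃ (hw0 i _))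
    exact mul_pos hw₂ (div_pos ((hF _ (by omega)).marginal_pos_of_le_of_le (by omega)
      (summable_indicator_eval_reducedWeight hsum hw₂.ne') hM₁ hM₃) hZ)

/-- If the interactions `Q_{i,j}` (for `i < j`) are nonnegative log-concave sequences
on ℤ and the weights `w_j` are ultra-log-concave sequences on ℕ (extended by `0` to
the negative integers), i.e. `k ↦ k! · w_j(k)` is log-concave with no internal zeros,
and the ensemble `P_{n,w,Q}` is well defined, then the pmf of each coordinate `h_i`
is an ultra-log-concave sequence on ℕ. -/
theorem ultraLogConcave_marginal_discrete_ensemble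
    (n : ℕ) (hn : 1 ≤ n) (w : Fin n → ℤ → ℝ) (Q : Fin n → Fin n → ℤ → ℝ)
    (hw0 : ∀ j k, 0 ≤ w j k)
    (hwneg : ∀ (j : Fin n) (k : ℤ), k < 0 → w j k = 0)
    (hQ0 : ∀ i j : Fin n, i < j → ∀ k, 0 ≤ Q i j k)
    (hwulc : ∀ (j : Fin n) (k : ℕ),
      ((Nat.factorial k : ℝ) * w j (k : ℤ)) *
        ((Nat.factorial (k + 2) : ℝ) * w j ((k : ℤ) + 2)) ≤
      ((Nat.factorial (k + 1) : ℝ) * w j ((k : ℤ) + 1)) ^ 2)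
    (hwsupp : ∀ (j : Fin n) (k₁ k₂ k₃ : ℕ), k₁ ≤ k₂ → k₂ ≤ k₃ →
      0 < w j (k₁ : ℤ) → 0 < w j (k₃ : ℤ) → 0 < w j (k₂ : ℤ))
    (hQlc : ∀ i j : Fin n, i < j → ∀ k : ℤ,
      Q i j (k - 1) * Q i j (k + 1) ≤ (Q i j k) ^ 2)
    (hQsupp : ∀ i j : Fin n, i < j → ∀ k₁ k₂ k₃ : ℤ, k₁ ≤ k₂ → k₂ ≤ k₃ →
      0 < Q i j k₁ → 0 < Q i j k₃ → 0 < Q i j k₂)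
    (hsum : Summable (fun h : {h : Fin n → ℤ // StrictMono h} => ensembleWeight n w Q h.1))
    (hZ : 0 < ∑' h : {h : Fin n → ℤ // StrictMono h}, ensembleWeight n w Q h.1) :
    ∀ i : Fin n,
      (∀ k : ℕ,
        ((Nat.factorial k : ℝ) * ensembleProb n w Q i (k : ℤ)) *
          ((Nat.factorial (k + 2) : ℝ) * ensembleProb n w Q i ((k : ℤ) + 2)) ≤
        ((Nat.factorial (k + 1) : ℝ) * ensembleProb n w Q i ((k : ℤ) + 1)) ^ 2) ∧
      (∀ k₁ k₂ k₃ : ℕ, k₁ ≤ k₂ → k₂ ≤ k₃ →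
        0 < ensembleProb n w Q i (k₁ : ℤ) → 0 < ensembleProb n w Q i (k₃ : ℤ) →
        0 < ensembleProb n w Q i (k₂ : ℤ)) :=
  ultraLogConcave_marginal_discrete_ensemble_general n w Q hw0 hwneg hQ0 hwulc hwsupp hQlc hQsupp
    hsum hZ
end
end

section
/- Fix θ > 0, n ≥ 1 and m ∈ [0,∞], and let w : ℝ → (0,∞) be a log-concave function (positive and continuous on [0, m + (n−1)θ], decaying fast enough when m = ∞ so that the normalizing constant is finite). Consider the discrete β-ensemble P_n^{θ,m} on tuples of nonnegative integers λ_1 ≥ λ_2 ≥ ⋯ ≥ λ_n with λ_1 ≤ m + (n−1)θ, with probability proportional to ∏_{1≤i<j≤n} Q_θ(λ_i − λ_j + (j−i)θ) · ∏_{j=1}^n w(λ_j + (n−j)θ), where Q_θ(x) = Γ(x+1)Γ(x+θ)/(Γ(x+1−θ)Γ(x)). Then the distribution of λ_1 under P_n^{θ,m} is log-concave: P(λ_1 = k−1)·P(λ_1 = k+1) ≤ P(λ_1 = k)² for all integers k ≥ 1. -/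
/-!
Extend the weight to integer tuples and regard each slice `{λ₁ = k}` as a subset of the
distributive lattice `ℤⁿ`. For antitone `a`, `b` the weight `W` satisfies
`W(a) W(b + 1) ≤ W(a ⊓ b + 1) W(a ⊔ b)`: for the one-body factors this is log-concavity of `w`;
for the two-body factors it holds because `x ↦ Q_θ(x + c)` is log-concave along integer steps
(its ratio `Q_θ(x + 1) / Q_θ(x) = (x + 1)(x + θ) / ((x + 1 - θ) x)` decreases), so that the
interaction, a function of the differences `λᵢ - λⱼ`, is log-supermodular. If `a` has top entry
`k - 1` and `b + 1` has top entry `k + 1`, then `a ⊓ b + 1` and `a ⊔ b` both have top entry `k`,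
and the Ahlswede–Daykin four functions theorem, extended to infinite sums, gives
`Z_{k-1} Z_{k+1} ≤ Z_k²` for the unnormalized slice weights `Z_k`.
-/

open scoped BigOperators ENNReal

noncomputable section

/-- The interaction `Q_θ(x) = Γ(x+1)Γ(x+θ)/(Γ(x+1-θ)Γ(x))`. -/
def Qtheta (θ x : ℝ) : ℝ :=
  Real.Gamma (x + 1) * Real.Gamma (x + θ) / (Real.Gamma (x + 1 - θ) * Real.Gamma x)

/-- Unnormalized weight of `λ₁ ≥ λ₂ ≥ ⋯ ≥ λ_n` in the discrete β-ensemble: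
`∏_{i<j} Q_θ(λ_i − λ_j + (j−i)θ) · ∏_j w(λ_j + (n−j)θ)` (indices `0`-based). -/
def dbetaWeight (n : ℕ) (θ : ℝ) (w : ℝ → ℝ) (l : Fin n → ℕ) : ℝ :=
  (∏ i : Fin n, ∏ j : Fin n, if i < j then
      Qtheta θ (((l i : ℝ) - (l j : ℝ)) + (((j : ℕ) - (i : ℕ) : ℕ) : ℝ) * θ) else 1) *
    ∏ j : Fin n, w ((l j : ℝ) + (((n - 1 - (j : ℕ) : ℕ)) : ℝ) * θ)

/-- The support constraint of `P_n^{θ,m}`: weakly decreasing tuples of naturals whose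
largest entry `λ₁` satisfies `λ₁ ≤ m + (n−1)θ` (with `m ∈ [0,∞]`). -/
def dbetaAdmissible (n : ℕ) (hn : 0 < n) (θ : ℝ) (m : ℝ≥0∞) (l : Fin n → ℕ) : Prop :=
  Antitone l ∧ ((l ⟨0, hn⟩ : ℕ) : ℝ≥0∞) ≤ m + ENNReal.ofReal (((n - 1 : ℕ) : ℝ) * θ)

/-- `P_n^{θ,m}(λ₁ = k)`. -/
def dbetaTopProb (n : ℕ) (hn : 0 < n) (θ : ℝ) (m : ℝ≥0∞) (w : ℝ → ℝ) (k : ℕ) : ℝ :=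
  (∑' l : {l : Fin n → ℕ // dbetaAdmissible n hn θ m l ∧ l ⟨0, hn⟩ = k},
      dbetaWeight n θ w l.1) /
    ∑' l : {l : Fin n → ℕ // dbetaAdmissible n hn θ m l}, dbetaWeight n θ w l.1

namespace Qtheta

variable {θ x y : ℝ}

theorem pos (hθ : 0 < θ) (hx : θ ≤ x) : 0 < Qtheta θ x :=
  div_pos (mul_pos (Real.Gamma_pos_of_pos (by linarith)) (Real.Gamma_pos_of_pos (by linarith)))
    (mul_pos (Real.Gamma_pos_of_pos (by linarith)) (Real.Gamma_pos_of_pos (by linarith)))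

theorem add_one (hθ : 0 < θ) (hx : θ ≤ x) :
    Qtheta θ (x + 1) = (x + 1) * (x + θ) / ((x + 1 - θ) * x) * Qtheta θ x := by
  have hx0 : 0 < x := hθ.trans_le hx
  have hΓ₁ : Real.Gamma (x + 1 - θ) ≠ 0 := (Real.Gamma_pos_of_pos (by linarith)).ne'
  have hΓ₂ : Real.Gamma x ≠ 0 := (Real.Gamma_pos_of_pos hx0).ne'
  have h₁ : x + 1 - θ ≠ 0 := by linarith
  have e₁ : Real.Gamma (x + 1 + θ) = (x + θ) * Real.Gamma (x + θ) := by
    rw [add_right_comm, Real.Gamma_add_one (by linarith)]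
  have e₂ : Real.Gamma (x + 1 + 1 - θ) = (x + 1 - θ) * Real.Gamma (x + 1 - θ) := by
    rw [show x + 1 + 1 - θ = x + 1 - θ + 1 by ring, Real.Gamma_add_one h₁]
  unfold Qtheta
  rw [e₁, e₂, Real.Gamma_add_one (by linarith : x + 1 ≠ 0), Real.Gamma_add_one hx0.ne']
  field_simp

theorem succ_ratio_anti (hθ : 0 < θ) (hx : θ ≤ x) (hxy : x ≤ y) :
    (y + 1) * (y + θ) / ((y + 1 - θ) * y) ≤ (x + 1) * (x + θ) / ((x + 1 - θ) * x) := by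
  have hx0 : 0 < x := hθ.trans_le hx
  rw [div_le_div_iff₀ (by nlinarith) (by nlinarith)]
  -- the difference of the two sides is `θ (y - x) (2xy + x + y + 1 - θ)`
  have hfac : 0 ≤ 2 * x * y + x + y + 1 - θ := by nlinarith
  nlinarith [mul_nonneg (mul_nonneg hθ.le (sub_nonneg.2 hxy)) hfac]

theorem mul_le_shift (hθ : 0 < θ) (hx : θ ≤ x) (hxy : x ≤ y) :
    Qtheta θ x * Qtheta θ (y + 1) ≤ Qtheta θ (x + 1) * Qtheta θ y := by
  have hy : θ ≤ y := hx.trans hxy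
  have hQ := mul_pos (pos hθ hx) (pos hθ hy)
  calc Qtheta θ x * Qtheta θ (y + 1)
      = (y + 1) * (y + θ) / ((y + 1 - θ) * y) * (Qtheta θ x * Qtheta θ y) := by
        rw [add_one hθ hy]; ring
    _ ≤ (x + 1) * (x + θ) / ((x + 1 - θ) * x) * (Qtheta θ x * Qtheta θ y) :=
        mul_le_mul_of_nonneg_right (succ_ratio_anti hθ hx hxy) hQ.le
    _ = Qtheta θ (x + 1) * Qtheta θ y := by rw [add_one hθ hx]; ring

end Qtheta

theorem mul_shift_le_of_logConcave {w : ℝ → ℝ} (hwpos : ∀ x, 0 < w x)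
    (hwlc : ∀ x y s : ℝ, 0 ≤ s → s ≤ 1 → w x ^ s * w y ^ (1 - s) ≤ w (s * x + (1 - s) * y))
    {x y : ℝ} (hxy : x ≤ y) : w x * w (y + 1) ≤ w (x + 1) * w y := by
  have hd : 0 < y + 1 - x := by linarith
  set s := 1 / (y + 1 - x)
  have hs : s * (y + 1 - x) = 1 := one_div_mul_cancel hd.ne'
  have h₁ := hwlc (y + 1) x s (by positivity) (by rw [div_le_one hd]; linarith)
  have h₂ := hwlc x (y + 1) s (by positivity) (by rw [div_le_one hd]; linarith)
  rw [show s * (y + 1) + (1 - s) * x = x + 1 by linear_combination hs] at h₁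
  rw [show s * x + (1 - s) * (y + 1) = y by linear_combination -hs] at h₂
  calc w x * w (y + 1)
      = (w x ^ s * w x ^ (1 - s)) * (w (y + 1) ^ s * w (y + 1) ^ (1 - s)) := by
        rw [← Real.rpow_add (hwpos _), ← Real.rpow_add (hwpos _)]; simp
    _ = (w (y + 1) ^ s * w x ^ (1 - s)) * (w x ^ s * w (y + 1) ^ (1 - s)) := by ring
    _ ≤ w (x + 1) * w y :=
        mul_le_mul h₁ h₂ (by have := hwpos x; have := hwpos (y + 1); positivity) (hwpos _).le

section DiscreteStep

variable {q : ℤ → ℝ} {x₀ : ℤ}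

theorem mul_shift_le_of_step (hq : ∀ x y, x₀ ≤ x → x ≤ y → q x * q (y + 1) ≤ q (x + 1) * q y)
    (d : ℕ) {x y : ℤ} (hx : x₀ ≤ x) (hxy : x + d ≤ y) : q x * q (y + d) ≤ q (x + d) * q y := by
  induction d generalizing x with
  | zero => simp
  | succ d ih =>
    push_cast at hxy ⊢
    calc q x * q (y + (d + 1)) ≤ q (x + 1) * q (y + d) := by
          rw [← add_assoc]; exact hq x (y + d) hx (by omega)
      _ ≤ q (x + 1 + d) * q y := ih (by omega) (by omega)
      _ = q (x + (d + 1)) * q y := by rw [add_right_comm, add_assoc]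

theorem mul_le_mul_of_step {A₁ A₂ I S : ℤ}
    (hq : ∀ x y, min A₁ A₂ ≤ x → x ≤ y → q x * q (y + 1) ≤ q (x + 1) * q y)
    (hsum : I + S = A₁ + A₂) (hmin : min A₁ A₂ ≤ min I S) : q A₁ * q A₂ ≤ q I * q S := by
  obtain ⟨d, hd⟩ : ∃ d : ℕ, min I S = min A₁ A₂ + d := ⟨(min I S - min A₁ A₂).toNat, by omega⟩
  have hmax : max A₁ A₂ = max I S + d := by omega
  rw [← fn_min_mul_fn_max q A₁, ← fn_min_mul_fn_max q I, hd, hmax]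
  exact mul_shift_le_of_step hq d le_rfl (by omega)

end DiscreteStep

theorem Finset.prod_mul_prod_le_prod_mul_prod {ι R : Type*} [CommMonoidWithZero R] [Preorder R]
    [ZeroLEOneClass R] [PosMulMono R] {s : Finset ι} {f g h k : ι → R}
    (h0 : ∀ i ∈ s, 0 ≤ f i * g i) (hle : ∀ i ∈ s, f i * g i ≤ h i * k i) :
    (∏ i ∈ s, f i) * ∏ i ∈ s, g i ≤ (∏ i ∈ s, h i) * ∏ i ∈ s, k i := by
  simpa only [← Finset.prod_mul_distrib] using Finset.prod_le_prod h0 hle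

section LatticeWeight

variable {n : ℕ} {θ : ℝ} {w : ℝ → ℝ}

def interactionFactor (θ : ℝ) (v : Fin n → ℤ) (i j : Fin n) : ℝ :=
  if i < j then Qtheta θ (((v i - v j : ℤ) : ℝ) + (((j : ℕ) - (i : ℕ) : ℕ) : ℝ) * θ) else 1

def interactionWeight (n : ℕ) (θ : ℝ) (v : Fin n → ℤ) : ℝ :=
  ∏ i : Fin n, ∏ j : Fin n, interactionFactor θ v i j

def siteWeight (n : ℕ) (θ : ℝ) (w : ℝ → ℝ) (v : Fin n → ℤ) : ℝ :=
  ∏ j : Fin n, w ((v j : ℝ) + ((n - 1 - (j : ℕ) : ℕ) : ℝ) * θ)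

def latticeWeight (n : ℕ) (θ : ℝ) (w : ℝ → ℝ) (v : Fin n → ℤ) : ℝ :=
  interactionWeight n θ v * siteWeight n θ w v

theorem latticeWeight_natCast (l : Fin n → ℕ) :
    latticeWeight n θ w (fun i => (l i : ℤ)) = dbetaWeight n θ w l := by
  simp only [latticeWeight, interactionWeight, interactionFactor, siteWeight, dbetaWeight]
  push_cast
  rfl

theorem le_interaction_arg (hθ : 0 ≤ θ) {A : ℤ} (hA : 0 ≤ A) {i j : Fin n} (hij : i < j) :
    θ ≤ (A : ℝ) + (((j : ℕ) - (i : ℕ) : ℕ) : ℝ) * θ := by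
  have hA' : (0 : ℝ) ≤ A := by exact_mod_cast hA
  have hji : (1 : ℝ) ≤ (((j : ℕ) - (i : ℕ) : ℕ) : ℝ) := by
    exact_mod_cast (by omega : 1 ≤ (j : ℕ) - (i : ℕ))
  nlinarith

theorem interactionFactor_pos (hθ : 0 < θ) {v : Fin n → ℤ} (hv : Antitone v) (i j : Fin n) :
    0 < interactionFactor θ v i j := by
  unfold interactionFactor
  split_ifs with hij
  · exact Qtheta.pos hθ (le_interaction_arg hθ.le (sub_nonneg.2 (hv hij.le)) hij)
  · exact one_pos

theorem interactionFactor_mul_le (hθ : 0 < θ) {a b : Fin n → ℤ} (ha : Antitone a)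
    (hb : Antitone b) (i j : Fin n) :
    interactionFactor θ a i j * interactionFactor θ b i j ≤
      interactionFactor θ (a ⊓ b) i j * interactionFactor θ (a ⊔ b) i j := by
  unfold interactionFactor
  split_ifs with hij
  · set c := (((j : ℕ) - (i : ℕ) : ℕ) : ℝ) * θ
    have hai := ha hij.le
    have hbi := hb hij.le
    refine mul_le_mul_of_step (q := fun A : ℤ => Qtheta θ ((A : ℝ) + c)) (fun x y hx hxy => ?_)
      (by simp only [Pi.inf_apply, Pi.sup_apply]; omega)
      (by simp only [Pi.inf_apply, Pi.sup_apply]; omega)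
    have hxy' : (x : ℝ) + c ≤ y + c := by gcongr
    convert Qtheta.mul_le_shift hθ (le_interaction_arg hθ.le (by omega : 0 ≤ x) hij) hxy'
      using 3 <;> push_cast <;> ring
  · norm_num

theorem interactionWeight_pos (hθ : 0 < θ) {v : Fin n → ℤ} (hv : Antitone v) :
    0 < interactionWeight n θ v :=
  Finset.prod_pos fun i _ => Finset.prod_pos fun j _ => interactionFactor_pos hθ hv i j

theorem interactionWeight_add_one (v : Fin n → ℤ) :
    interactionWeight n θ (v + 1) = interactionWeight n θ v := by
  simp only [interactionWeight, interactionFactor, Pi.add_apply, Pi.one_apply,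
    add_sub_add_right_eq_sub]

theorem interactionWeight_mul_le (hθ : 0 < θ) {a b : Fin n → ℤ} (ha : Antitone a)
    (hb : Antitone b) :
    interactionWeight n θ a * interactionWeight n θ b ≤
      interactionWeight n θ (a ⊓ b) * interactionWeight n θ (a ⊔ b) := by
  have h0 : ∀ i j, 0 ≤ interactionFactor θ a i j * interactionFactor θ b i j := fun i j =>
    (mul_pos (interactionFactor_pos hθ ha i j) (interactionFactor_pos hθ hb i j)).le
  refine Finset.prod_mul_prod_le_prod_mul_prod (fun i _ => ?_) (fun i _ => ?_)
  · rw [← Finset.prod_mul_distrib]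
    exact Finset.prod_nonneg fun j _ => h0 i j
  · exact Finset.prod_mul_prod_le_prod_mul_prod (fun j _ => h0 i j)
      (fun j _ => interactionFactor_mul_le hθ ha hb i j)

theorem siteWeight_pos (hwpos : ∀ x, 0 < w x) (v : Fin n → ℤ) : 0 < siteWeight n θ w v :=
  Finset.prod_pos fun _ _ => hwpos _

theorem siteWeight_mul_le (hwpos : ∀ x, 0 < w x)
    (hwlc : ∀ x y s : ℝ, 0 ≤ s → s ≤ 1 → w x ^ s * w y ^ (1 - s) ≤ w (s * x + (1 - s) * y))
    (a b : Fin n → ℤ) :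
    siteWeight n θ w a * siteWeight n θ w (b + 1) ≤
      siteWeight n θ w (a ⊓ b + 1) * siteWeight n θ w (a ⊔ b) := by
  refine Finset.prod_mul_prod_le_prod_mul_prod
    (fun j _ => (mul_pos (hwpos _) (hwpos _)).le) (fun j _ => ?_)
  set c := ((n - 1 - (j : ℕ) : ℕ) : ℝ) * θ
  refine mul_le_mul_of_step (q := fun A : ℤ => w ((A : ℝ) + c)) (fun x y _ hxy => ?_)
    (by simp only [Pi.add_apply, Pi.one_apply, Pi.inf_apply, Pi.sup_apply]; omega)
    (by simp only [Pi.add_apply, Pi.one_apply, Pi.inf_apply, Pi.sup_apply]; omega)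
  have hxy' : (x : ℝ) + c ≤ y + c := by gcongr
  convert mul_shift_le_of_logConcave hwpos hwlc hxy' using 3 <;> push_cast <;> ring

theorem latticeWeight_nonneg (hθ : 0 < θ) (hwpos : ∀ x, 0 < w x) {v : Fin n → ℤ}
    (hv : Antitone v) : 0 ≤ latticeWeight n θ w v :=
  (mul_pos (interactionWeight_pos hθ hv) (siteWeight_pos hwpos v)).le

theorem latticeWeight_mul_le (hθ : 0 < θ) (hwpos : ∀ x, 0 < w x)
    (hwlc : ∀ x y s : ℝ, 0 ≤ s → s ≤ 1 → w x ^ s * w y ^ (1 - s) ≤ w (s * x + (1 - s) * y))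
    {a b : Fin n → ℤ} (ha : Antitone a) (hb : Antitone b) :
    latticeWeight n θ w a * latticeWeight n θ w (b + 1) ≤
      latticeWeight n θ w (a ⊓ b + 1) * latticeWeight n θ w (a ⊔ b) := by
  simp only [latticeWeight, interactionWeight_add_one]
  rw [mul_mul_mul_comm, mul_mul_mul_comm (interactionWeight n θ (a ⊓ b))]
  exact mul_le_mul (interactionWeight_mul_le hθ ha hb) (siteWeight_mul_le hwpos hwlc a b)
    (mul_pos (siteWeight_pos hwpos a) (siteWeight_pos hwpos _)).le
    (mul_pos (interactionWeight_pos hθ (ha.inf hb)) (interactionWeight_pos hθ (ha.sup hb))).le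

end LatticeWeight

theorem four_functions_theorem_hasSum {α : Type*} [DistribLattice α] {f₁ f₂ f₃ f₄ : α → ℝ}
    {s₁ s₂ s₃ s₄ : ℝ} (h₁ : 0 ≤ f₁) (h₂ : 0 ≤ f₂) (h₃ : 0 ≤ f₃) (h₄ : 0 ≤ f₄)
    (hs₁ : HasSum f₁ s₁) (hs₂ : HasSum f₂ s₂) (hs₃ : HasSum f₃ s₃) (hs₄ : HasSum f₄ s₄)
    (h : ∀ a b, f₁ a * f₂ b ≤ f₃ (a ⊓ b) * f₄ (a ⊔ b)) : s₁ * s₂ ≤ s₃ * s₄ := by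
  classical
  refine hasSum_le_of_sum_le (hs₁.mul hs₂ (hs₁.summable.mul_of_nonneg hs₂.summable h₁ h₂))
    fun P => ?_
  calc ∑ x ∈ P, f₁ x.1 * f₂ x.2
      ≤ ∑ x ∈ P.image Prod.fst ×ˢ P.image Prod.snd, f₁ x.1 * f₂ x.2 :=
        Finset.sum_le_sum_of_subset_of_nonneg Finset.subset_product
          fun x _ _ => mul_nonneg (h₁ _) (h₂ _)
    _ = (∑ a ∈ P.image Prod.fst, f₁ a) * ∑ b ∈ P.image Prod.snd, f₂ b := by
        rw [Finset.sum_product, Finset.sum_mul_sum]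
    _ ≤ s₃ * s₄ := (four_functions_theorem f₁ f₂ f₃ f₄ h₁ h₂ h₃ h₄ h _ _).trans <|
        mul_le_mul (sum_le_hasSum _ (fun i _ => h₃ i) hs₃) (sum_le_hasSum _ (fun i _ => h₄ i) hs₄)
          (Finset.sum_nonneg fun i _ => h₄ i) (hs₃.nonneg h₃)

section TopSlice

variable {n : ℕ} (hn : 0 < n) (θ : ℝ) (m : ℝ≥0∞) (w : ℝ → ℝ)

def dbetaTopWeight (k : ℕ) : ℝ :=
  ∑' l : {l : Fin n → ℕ // dbetaAdmissible n hn θ m l ∧ l ⟨0, hn⟩ = k}, dbetaWeight n θ w l.1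

def topSlice (k : ℕ) : Set (Fin n → ℤ) :=
  {v | Antitone v ∧ 0 ≤ v ∧ v ⟨0, hn⟩ = k ∧
    (k : ℝ≥0∞) ≤ m + ENNReal.ofReal (((n - 1 : ℕ) : ℝ) * θ)}

def sliceWeight (k : ℕ) : (Fin n → ℤ) → ℝ :=
  (topSlice hn θ m k).indicator (latticeWeight n θ w)

variable {hn θ m w}

theorem natCast_mem_topSlice {k : ℕ} {l : Fin n → ℕ} :
    (fun i => (l i : ℤ)) ∈ topSlice hn θ m k ↔ dbetaAdmissible n hn θ m l ∧ l ⟨0, hn⟩ = k := by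
  simp only [topSlice, dbetaAdmissible, Set.mem_ofPred_eq, Nat.cast_inj]
  constructor
  · rintro ⟨hanti, -, rfl, hcap⟩
    exact ⟨⟨fun i j hij => Nat.cast_le.1 (hanti hij), hcap⟩, rfl⟩
  · rintro ⟨⟨hanti, hcap⟩, rfl⟩
    exact ⟨fun i j hij => Nat.cast_le.2 (hanti hij), fun i => by positivity, rfl, hcap⟩

theorem exists_natCast_eq_of_mem_topSlice {k : ℕ} {v : Fin n → ℤ} (hv : v ∈ topSlice hn θ m k) :
    ∃ l : Fin n → ℕ, (fun i => (l i : ℤ)) = v :=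
  ⟨fun i => (v i).toNat, funext fun i => Int.toNat_of_nonneg (hv.2.1 i)⟩

theorem hasSum_sliceWeight {k : ℕ} {s : ℝ}
    (h : HasSum (fun l : {l : Fin n → ℕ // dbetaAdmissible n hn θ m l ∧ l ⟨0, hn⟩ = k} =>
      dbetaWeight n θ w l.1) s) :
    HasSum (sliceWeight hn θ m w k) s := by
  let g : {l : Fin n → ℕ // dbetaAdmissible n hn θ m l ∧ l ⟨0, hn⟩ = k} → (Fin n → ℤ) :=
    fun l i => (l.1 i : ℤ)
  have hg : Function.Injective g := fun l l' hll' =>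
    Subtype.ext (funext fun i => Nat.cast_injective (congrFun hll' i))
  refine (hg.hasSum_iff fun v hv => Set.indicator_of_notMem (fun hvS => ?_) _).1 ?_
  · obtain ⟨l, rfl⟩ := exists_natCast_eq_of_mem_topSlice hvS
    exact hv ⟨⟨l, natCast_mem_topSlice.1 hvS⟩, rfl⟩
  · convert h using 1
    funext l
    simp only [Function.comp, g, Set.indicator_of_mem (natCast_mem_topSlice.2 l.2),
      latticeWeight_natCast]

theorem sliceWeight_nonneg (hθ : 0 < θ) (hwpos : ∀ x, 0 < w x) (k : ℕ) :
    0 ≤ sliceWeight hn θ m w k :=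
  fun v => Set.indicator_nonneg (fun _ hv => latticeWeight_nonneg hθ hwpos hv.1) v

theorem inf_add_one_mem_topSlice {k : ℕ} (hk : 1 ≤ k) {a b : Fin n → ℤ}
    (ha : a ∈ topSlice hn θ m (k - 1)) (hb : b + 1 ∈ topSlice hn θ m (k + 1)) :
    a ⊓ b + 1 ∈ topSlice hn θ m k := by
  obtain ⟨ha₁, ha₂, ha₃, -⟩ := ha
  obtain ⟨hb₁, hb₂, hb₃, hb₄⟩ := hb
  refine ⟨fun i j hij => ?_, fun i => ?_, ?_, le_trans (by exact_mod_cast k.le_succ) hb₄⟩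
  · have := ha₁ hij
    have := hb₁ hij
    simp only [Pi.add_apply, Pi.one_apply, Pi.inf_apply] at *
    omega
  · have := ha₂ i
    have := hb₂ i
    simp only [Pi.add_apply, Pi.one_apply, Pi.inf_apply, Pi.zero_apply] at *
    omega
  · simp only [Pi.add_apply, Pi.one_apply, Pi.inf_apply] at *
    omega

theorem sup_mem_topSlice {k : ℕ} (hk : 1 ≤ k) {a b : Fin n → ℤ}
    (ha : a ∈ topSlice hn θ m (k - 1)) (hb : b + 1 ∈ topSlice hn θ m (k + 1)) :
    a ⊔ b ∈ topSlice hn θ m k := by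
  obtain ⟨ha₁, ha₂, ha₃, -⟩ := ha
  obtain ⟨hb₁, -, hb₃, hb₄⟩ := hb
  refine ⟨fun i j hij => ?_, fun i => ?_, ?_, le_trans (by exact_mod_cast k.le_succ) hb₄⟩
  · have := ha₁ hij
    have := hb₁ hij
    simp only [Pi.add_apply, Pi.one_apply, Pi.sup_apply] at *
    omega
  · have := ha₂ i
    simp only [Pi.sup_apply, Pi.zero_apply] at *
    omega
  · simp only [Pi.add_apply, Pi.one_apply, Pi.sup_apply] at *
    omega

end TopSlice

section Numerator

variable {n : ℕ} {hn : 0 < n} {θ : ℝ} {m : ℝ≥0∞} {w : ℝ → ℝ}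

theorem sliceWeight_mul_le (hθ : 0 < θ) (hwpos : ∀ x, 0 < w x)
    (hwlc : ∀ x y s : ℝ, 0 ≤ s → s ≤ 1 → w x ^ s * w y ^ (1 - s) ≤ w (s * x + (1 - s) * y))
    {k : ℕ} (hk : 1 ≤ k) (a b : Fin n → ℤ) :
    sliceWeight hn θ m w (k - 1) a * sliceWeight hn θ m w (k + 1) (b + 1) ≤
      sliceWeight hn θ m w k (a ⊓ b + 1) * sliceWeight hn θ m w k (a ⊔ b) := by
  have hRHS : 0 ≤ sliceWeight hn θ m w k (a ⊓ b + 1) * sliceWeight hn θ m w k (a ⊔ b) :=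
    mul_nonneg (sliceWeight_nonneg hθ hwpos k _) (sliceWeight_nonneg hθ hwpos k _)
  by_cases ha : a ∈ topSlice hn θ m (k - 1)
  · by_cases hb : b + 1 ∈ topSlice hn θ m (k + 1)
    · have hb' : Antitone b := fun i j hij => by simpa using hb.1 hij
      simp only [sliceWeight, Set.indicator_of_mem ha, Set.indicator_of_mem hb,
        Set.indicator_of_mem (inf_add_one_mem_topSlice hk ha hb),
        Set.indicator_of_mem (sup_mem_topSlice hk ha hb)]
      exact latticeWeight_mul_le hθ hwpos hwlc ha.1 hb'
    · simp only [sliceWeight] at hRHS ⊢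
      rwa [Set.indicator_of_notMem hb, mul_zero]
  · simp only [sliceWeight] at hRHS ⊢
    rwa [Set.indicator_of_notMem ha, zero_mul]

theorem dbetaTopWeight_mul_le (hθ : 0 < θ) (hwpos : ∀ x, 0 < w x)
    (hwlc : ∀ x y s : ℝ, 0 ≤ s → s ≤ 1 → w x ^ s * w y ^ (1 - s) ≤ w (s * x + (1 - s) * y))
    (hsum : Summable (fun l : {l : Fin n → ℕ // dbetaAdmissible n hn θ m l} =>
      dbetaWeight n θ w l.1))
    {k : ℕ} (hk : 1 ≤ k) :
    dbetaTopWeight hn θ m w (k - 1) * dbetaTopWeight hn θ m w (k + 1) ≤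
      dbetaTopWeight hn θ m w k ^ 2 := by
  have hN (j : ℕ) : HasSum (sliceWeight hn θ m w j) (dbetaTopWeight hn θ m w j) :=
    hasSum_sliceWeight (hsum.comp_injective (Subtype.impEmbedding
      (fun l => dbetaAdmissible n hn θ m l ∧ l ⟨0, hn⟩ = j) _ fun _ h => h.1).injective).hasSum
  have hN₁ (j : ℕ) : HasSum (fun v => sliceWeight hn θ m w j (v + 1)) (dbetaTopWeight hn θ m w j) :=
    (Equiv.addRight 1).hasSum_iff.2 (hN j)
  have h0 := sliceWeight_nonneg (hn := hn) (m := m) hθ hwpos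
  rw [sq]
  exact four_functions_theorem_hasSum (h0 _) (fun v => h0 _ (v + 1)) (fun v => h0 _ (v + 1)) (h0 _)
    (hN (k - 1)) (hN₁ (k + 1)) (hN₁ k) (hN k) (sliceWeight_mul_le hθ hwpos hwlc hk)

end Numerator

theorem logConcave_top_discrete_beta_ensemble_general
    (n : ℕ) (hn : 0 < n) (θ : ℝ) (hθ : 0 < θ) (m : ℝ≥0∞)
    (w : ℝ → ℝ) (hwpos : ∀ x, 0 < w x)
    (hwlc : ∀ x y s : ℝ, 0 ≤ s → s ≤ 1 →
      w x ^ s * w y ^ (1 - s) ≤ w (s * x + (1 - s) * y))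
    (hsum : Summable (fun l : {l : Fin n → ℕ // dbetaAdmissible n hn θ m l} =>
      dbetaWeight n θ w l.1)) :
    ∀ k : ℕ, 1 ≤ k →
      dbetaTopProb n hn θ m w (k - 1) * dbetaTopProb n hn θ m w (k + 1) ≤
        (dbetaTopProb n hn θ m w k) ^ 2 := by
  intro k hk
  change dbetaTopWeight hn θ m w (k - 1) / _ * (dbetaTopWeight hn θ m w (k + 1) / _) ≤
    (dbetaTopWeight hn θ m w k / _) ^ 2
  rw [div_mul_div_comm, div_pow, ← sq]
  exact div_le_div_of_nonneg_right (dbetaTopWeight_mul_le hθ hwpos hwlc hsum hk) (sq_nonneg _)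

/-- In the integrable discrete β-ensemble `P_n^{θ,m}` with a positive log-concave
weight function `w` (and finite positive normalizing constant), the distribution of
the largest part `λ₁` is log-concave: `P(λ₁=k−1)·P(λ₁=k+1) ≤ P(λ₁=k)²` for `k ≥ 1`. -/
theorem logConcave_top_discrete_beta_ensemble
    (n : ℕ) (hn : 0 < n) (θ : ℝ) (hθ : 0 < θ) (m : ℝ≥0∞)
    (w : ℝ → ℝ) (hwpos : ∀ x, 0 < w x)
    (hwlc : ∀ x y s : ℝ, 0 ≤ s → s ≤ 1 →
      w x ^ s * w y ^ (1 - s) ≤ w (s * x + (1 - s) * y))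
    (hsum : Summable (fun l : {l : Fin n → ℕ // dbetaAdmissible n hn θ m l} =>
      dbetaWeight n θ w l.1))
    (hZ : 0 < ∑' l : {l : Fin n → ℕ // dbetaAdmissible n hn θ m l}, dbetaWeight n θ w l.1) :
    ∀ k : ℕ, 1 ≤ k →
      dbetaTopProb n hn θ m w (k - 1) * dbetaTopProb n hn θ m w (k + 1) ≤
        (dbetaTopProb n hn θ m w k) ^ 2 :=
  logConcave_top_discrete_beta_ensemble_general n hn θ hθ m w hwpos hwlc hsum
end
end

section
/- Let β > 0, n ≥ 1, and let V : ℝ → ℝ ∪ {∞} be any potential such that Z = ∫_{W_n} exp(−β·H_n(x)) dx is finite and positive, where H_n(x) = −Σ_{1≤i<j≤n} log|x_i − x_j| + Σ_{i=1}^n V(x_i) and W_n = {x ∈ ℝ^n : x_1 < ⋯ < x_n}. Let f(x) = Z^{−1}·exp(−β·H_n(x))·1_{W_n}(x) be the density of the ordered β-Coulomb gas. Then f is log-supermodular: f(x)·f(y) ≤ f(x ∧ y)·f(x ∨ y) for all x, y ∈ ℝ^n, where ∧ and ∨ denote componentwise minimum and maximum. Consequently the coordinates of the β-Coulomb gas are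 positively associated: for any two bounded measurable functions φ, ψ : ℝ^n → ℝ that are nondecreasing in each coordinate, E[φ(X)·ψ(X)] ≥ E[φ(X)]·E[ψ(X)] when X has density f. -/
open scoped BigOperators
open MeasureTheory

noncomputable section

/-- `exp(-t)` for an extended-real `t`, with `exp(-∞) = 0`. -/
def expNeg (t : EReal) : ℝ :=
  if t = ⊤ then 0 else if t = ⊥ then 0 else Real.exp (-(t.toReal))

open Classical in
/-- The unnormalized density `exp(-β H_n(x)) 1_{W_n}(x)` of the ordered β-Coulomb gas
with potential `V : ℝ → ℝ ∪ {∞}`. -/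
def coulombDensity (n : ℕ) (β : ℝ) (V : ℝ → EReal) (x : Fin n → ℝ) : ℝ :=
  if StrictMono x then
    (∏ i : Fin n, ∏ j : Fin n, if i < j then (x j - x i) ^ β else 1) *
      ∏ i : Fin n, expNeg ((β : EReal) * V (x i))
  else 0

/-- The (normalized) ordered β-Coulomb gas as a measure on `ℝⁿ`. -/
def coulombMeasure (n : ℕ) (β : ℝ) (V : ℝ → EReal) : Measure (Fin n → ℝ) :=
  volume.withDensity fun x =>
    ENNReal.ofReal (coulombDensity n β V x / ∫ z : Fin n → ℝ, coulombDensity n β V z)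

/-!
On the Weyl chamber, which is a sublattice of `ℝⁿ`, the Coulomb density is a product of pair
factors `(x j - x i) ^ β` and one-particle factors `exp (-β V (x i))`. The one-particle factors
are log-modular, and the pair factors are log-supermodular because
`(b - a) * (d - c) ≤ (b ⊓ d - a ⊓ c) * (b ⊔ d - a ⊔ c)`; products of nonnegative
log-supermodular functions are log-supermodular, and so is the extension by zero off a sublattice.

Positive association is the continuous FKG (Harris–Preston) inequality. It follows from the
four functions inequality `∫ h₁ * ∫ h₂ ≤ ∫ h₃ * ∫ h₄` on `αⁿ`, valid whenever
`h₁ x * h₂ y ≤ h₃ (x ⊓ y) * h₄ (x ⊔ y)`: by Tonelli and induction on `n` it reduces to `n = 1`,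
where symmetrizing the double integral reduces it to the same inequality on the two-point
lattice `{t ⊓ s, t ⊔ s}`. Applied to `h₁ = Φ f`, `h₂ = Ψ f`, `h₃ = f`, `h₄ = Φ Ψ f` with
`Φ, Ψ` monotone it gives `E[Φ] E[Ψ] ≤ E[Φ Ψ]`, and bounded functions are reduced to nonnegative
ones by adding constants, which does not change the covariance.
-/

open scoped ENNReal

def LogSupermodular {α β : Type*} [Lattice α] [Mul β] [LE β] (f : α → β) : Prop :=
  ∀ x y, f x * f y ≤ f (x ⊓ y) * f (x ⊔ y)

namespace LogSupermodular

variable {α β : Type*} [Lattice α]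

section OrderedSemiring

variable [CommSemiring β] [PartialOrder β] [IsOrderedRing β]

theorem mul {f g : α → β} (hf : LogSupermodular f) (hg : LogSupermodular g) (hf₀ : 0 ≤ f)
    (hg₀ : 0 ≤ g) : LogSupermodular fun x => f x * g x := fun x y =>
  calc f x * g x * (f y * g y) = (f x * f y) * (g x * g y) := by ring
    _ ≤ (f (x ⊓ y) * f (x ⊔ y)) * (g (x ⊓ y) * g (x ⊔ y)) :=
        mul_le_mul (hf x y) (hg x y) (mul_nonneg (hg₀ x) (hg₀ y)) (mul_nonneg (hf₀ _) (hf₀ _))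
    _ = f (x ⊓ y) * g (x ⊓ y) * (f (x ⊔ y) * g (x ⊔ y)) := by ring

theorem finset_prod {ι : Type*} {s : Finset ι} {f : ι → α → β}
    (hf : ∀ i ∈ s, LogSupermodular (f i)) (hf₀ : ∀ i ∈ s, 0 ≤ f i) :
    LogSupermodular fun x => ∏ i ∈ s, f i x := by
  classical
  induction s using Finset.induction_on with
  | empty => simp [LogSupermodular]
  | insert i s hi ih =>
    simp only [Finset.prod_insert hi]
    exact (hf i (s.mem_insert_self i)).mul
      (ih (fun j hj => hf j (Finset.mem_insert_of_mem hj))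
        fun j hj => hf₀ j (Finset.mem_insert_of_mem hj))
      (hf₀ i (s.mem_insert_self i))
      fun x => Finset.prod_nonneg fun j hj => hf₀ j (Finset.mem_insert_of_mem hj) x

theorem indicator {L : Sublattice α} {f : α → β} (hf₀ : ∀ x ∈ L, 0 ≤ f x)
    (hf : LogSupermodular fun x : L => f x) : LogSupermodular ((L : Set α).indicator f) := by
  intro x y
  have hnonneg : ∀ z, 0 ≤ (L : Set α).indicator f z := Set.indicator_nonneg hf₀
  by_cases hx : x ∈ L
  · by_cases hy : y ∈ L
    · simpa [Set.indicator_of_mem, hx, hy, L.infClosed hx hy, L.supClosed hx hy] using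
        hf ⟨x, hx⟩ ⟨y, hy⟩
    · simpa [Set.indicator_of_notMem hy] using mul_nonneg (hnonneg _) (hnonneg _)
  · simpa [Set.indicator_of_notMem hx] using mul_nonneg (hnonneg _) (hnonneg _)

end OrderedSemiring

theorem restrict [Mul β] [LE β] {f : α → β} (hf : LogSupermodular f) (L : Sublattice α) :
    LogSupermodular fun x : L => f x := fun x y => hf x y

theorem div_const {K : Type*} [Field K] [LinearOrder K] [IsStrictOrderedRing K] {f : α → K}
    (hf : LogSupermodular f) {c : K} (hc : 0 ≤ c) : LogSupermodular fun x => f x / c :=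
  fun x y => by
    simpa only [div_mul_div_comm] using div_le_div_of_nonneg_right (hf x y) (mul_nonneg hc hc)

theorem ennreal_ofReal {f : α → ℝ} (hf : LogSupermodular f) (hf₀ : 0 ≤ f) :
    LogSupermodular fun x => ENNReal.ofReal (f x) := fun x y => by
  simpa only [← ENNReal.ofReal_mul (hf₀ _)] using ENNReal.ofReal_le_ofReal (hf x y)

end LogSupermodular

theorem logSupermodular_apply {ι α β : Type*} [LinearOrder α] [CommMonoid β] [Preorder β]
    (u : α → β) (i : ι) : LogSupermodular fun x : ι → α => u (x i) := by
  intro x y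
  rcases le_total (x i) (y i) with h | h <;> simp [h, mul_comm]

theorem sub_mul_sub_le_inf_sub_inf_mul_sup_sub_sup {R : Type*} [CommRing R] [LinearOrder R]
    [IsStrictOrderedRing R] (a b c d : R) :
    (b - a) * (d - c) ≤ (b ⊓ d - a ⊓ c) * (b ⊔ d - a ⊔ c) := by
  rcases le_total a c with h₁ | h₁ <;> rcases le_total b d with h₂ | h₂ <;>
    simp only [inf_of_le_left, inf_of_le_right, sup_of_le_left, sup_of_le_right, h₁, h₂] <;>
    nlinarith

def strictMonoSublattice (ι α : Type*) [Preorder ι] [LinearOrder α] : Sublattice (ι → α) where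
  carrier := {x | StrictMono x}
  supClosed' _ hx _ hy _ _ hij := max_lt ((hx hij).trans_le le_sup_left)
    ((hy hij).trans_le le_sup_right)
  infClosed' _ hx _ hy _ _ hij := lt_min (inf_le_left.trans_lt (hx hij))
    (inf_le_right.trans_lt (hy hij))

theorem logSupermodular_rpow_sub {ι : Type*} [Preorder ι] [DecidableLT ι] {β : ℝ} (hβ : 0 ≤ β)
    (i j : ι) :
    LogSupermodular fun x : strictMonoSublattice ι ℝ =>
      if i < j then ((x : ι → ℝ) j - (x : ι → ℝ) i) ^ β else 1 := by
  intro x y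
  split_ifs with hij
  · have hx := x.2 hij
    have hy := y.2 hij
    simp only [Sublattice.coe_inf, Sublattice.coe_sup, Pi.inf_apply, Pi.sup_apply]
    rw [← Real.mul_rpow (by linarith) (by linarith), ← Real.mul_rpow
      (sub_nonneg.2 (inf_le_inf hx.le hy.le)) (sub_nonneg.2 (sup_le_sup hx.le hy.le))]
    exact Real.rpow_le_rpow (mul_nonneg (by linarith) (by linarith))
      (sub_mul_sub_le_inf_sub_inf_mul_sup_sub_sup _ _ _ _) hβ
  · simp

theorem expNeg_nonneg (t : EReal) : 0 ≤ expNeg t := by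
  unfold expNeg
  split_ifs <;> positivity

theorem ite_rpow_sub_nonneg {ι : Type*} [Preorder ι] [DecidableLT ι] {x : ι → ℝ}
    (hx : StrictMono x) (β : ℝ) (i j : ι) : 0 ≤ if i < j then (x j - x i) ^ β else 1 := by
  split_ifs with hij
  · exact Real.rpow_nonneg (sub_nonneg.2 (hx hij).le) β
  · exact zero_le_one

def coulombWeight (n : ℕ) (β : ℝ) (V : ℝ → EReal) (x : Fin n → ℝ) : ℝ :=
  (∏ i : Fin n, ∏ j : Fin n, if i < j then (x j - x i) ^ β else 1) *
    ∏ i : Fin n, expNeg ((β : EReal) * V (x i))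

theorem coulombWeight_nonneg {n : ℕ} (β : ℝ) (V : ℝ → EReal) {x : Fin n → ℝ}
    (hx : StrictMono x) : 0 ≤ coulombWeight n β V x :=
  mul_nonneg (Finset.prod_nonneg fun i _ => Finset.prod_nonneg fun j _ =>
    ite_rpow_sub_nonneg hx β i j) (Finset.prod_nonneg fun _ _ => expNeg_nonneg _)

theorem coulombDensity_eq_indicator (n : ℕ) (β : ℝ) (V : ℝ → EReal) :
    coulombDensity n β V =
      (strictMonoSublattice (Fin n) ℝ : Set (Fin n → ℝ)).indicator (coulombWeight n β V) := by
  ext x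
  by_cases hx : StrictMono x
  · rw [Set.indicator_of_mem (show x ∈ _ from hx)]
    simp [coulombDensity, coulombWeight, hx]
  · rw [Set.indicator_of_notMem (show x ∉ _ from hx)]
    simp [coulombDensity, hx]

theorem coulombDensity_nonneg (n : ℕ) (β : ℝ) (V : ℝ → EReal) : 0 ≤ coulombDensity n β V := by
  rw [coulombDensity_eq_indicator]
  exact Set.indicator_nonneg fun x hx => coulombWeight_nonneg β V hx

theorem logSupermodular_coulombDensity (n : ℕ) {β : ℝ} (hβ : 0 ≤ β) (V : ℝ → EReal) :
    LogSupermodular (coulombDensity n β V) := by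
  rw [coulombDensity_eq_indicator]
  refine LogSupermodular.indicator (fun x hx => coulombWeight_nonneg β V hx) ?_
  refine LogSupermodular.mul ?_ ?_
    (fun x => Finset.prod_nonneg fun i _ => Finset.prod_nonneg fun j _ =>
      ite_rpow_sub_nonneg x.2 β i j)
    (fun x => Finset.prod_nonneg fun _ _ => expNeg_nonneg _)
  · exact LogSupermodular.finset_prod
      (fun i _ => LogSupermodular.finset_prod (fun j _ => logSupermodular_rpow_sub hβ i j)
        fun j _ x => ite_rpow_sub_nonneg x.2 β i j)
      fun i _ x => Finset.prod_nonneg fun j _ => ite_rpow_sub_nonneg x.2 β i j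
  · exact LogSupermodular.finset_prod
      (fun i _ => (logSupermodular_apply (fun t => expNeg ((β : EReal) * V t)) i).restrict _)
      fun _ _ _ => expNeg_nonneg _

theorem mul_add_mul_le_mul_self_add_mul {R : Type*} [CommSemiring R] [PartialOrder R]
    [IsOrderedRing R] [CanonicallyOrderedAdd R] {x y z : R} (hx : x ≤ z) (hy : y ≤ z) :
    x * z + y * z ≤ z * z + x * y := by
  obtain ⟨c, rfl⟩ := exists_add_of_le hy
  calc x * (y + c) + y * (y + c) = x * y + (y * (y + c) + c * x) := by ring
    _ ≤ x * y + (y * (y + c) + c * (y + c)) := by gcongr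
    _ = (y + c) * (y + c) + x * y := by ring

theorem ENNReal.four_functions_two_point {a b c d p q r s : ℝ≥0∞} (hac : a * c ≤ p * r)
    (hbd : b * d ≤ q * s) (had : a * d ≤ p * s) (hbc : b * c ≤ p * s) :
    a * d + b * c ≤ p * s + q * r := by
  rcases eq_or_ne (p * s) 0 with h₀ | h₀
  · rw [h₀, nonpos_iff_eq_zero] at had hbc
    simp [had, hbc]
  rcases eq_or_ne (p * s) ⊤ with htop | htop
  · simp [htop]
  rw [← ENNReal.mul_le_mul_iff_right h₀ htop]
  calc p * s * (a * d + b * c) = a * d * (p * s) + b * c * (p * s) := by ring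
    _ ≤ p * s * (p * s) + (a * c) * (b * d) := by
        rw [show a * c * (b * d) = a * d * (b * c) by ring]
        exact mul_add_mul_le_mul_self_add_mul had hbc
    _ ≤ p * s * (p * s) + (p * r) * (q * s) := by gcongr
    _ = p * s * (p * s + q * r) := by ring

section FourFunctions

variable {α : Type*} [LinearOrder α]

theorem four_functions_symmetrized {G₁ G₂ G₃ G₄ : α → ℝ≥0∞}
    (hG : ∀ t s, G₁ t * G₂ s ≤ G₃ (t ⊓ s) * G₄ (t ⊔ s)) (t s : α) :
    G₁ t * G₂ s + G₁ s * G₂ t ≤ G₃ t * G₄ s + G₃ s * G₄ t := by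
  wlog hts : t ≤ s generalizing t s
  · rw [add_comm, add_comm (G₃ t * _)]
    exact this s t (le_of_not_ge hts)
  have htt := hG t t
  have hss := hG s s
  have hts' := hG t s
  have hst := hG s t
  simp only [inf_idem, sup_idem, inf_eq_left.2 hts, sup_eq_right.2 hts, inf_eq_right.2 hts,
    sup_eq_left.2 hts] at htt hss hts' hst
  exact ENNReal.four_functions_two_point htt hss hts' hst

variable [MeasurableSpace α] (μ : Measure α)

theorem lintegral_mul_lintegral_le_of_four_functions {G₁ G₂ G₃ G₄ : α → ℝ≥0∞}
    (hG₁ : Measurable G₁) (hG₂ : Measurable G₂) (hG₃ : Measurable G₃) (hG₄ : Measurable G₄)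
    (hG : ∀ t s, G₁ t * G₂ s ≤ G₃ (t ⊓ s) * G₄ (t ⊔ s)) :
    (∫⁻ t, G₁ t ∂μ) * (∫⁻ t, G₂ t ∂μ) ≤ (∫⁻ t, G₃ t ∂μ) * (∫⁻ t, G₄ t ∂μ) := by
  have hsymm : ∀ F H : α → ℝ≥0∞, Measurable F → Measurable H →
      ∫⁻ s, ∫⁻ t, F t * H s + F s * H t ∂μ ∂μ = 2 * ((∫⁻ t, F t ∂μ) * ∫⁻ t, H t ∂μ) := by
    intro F H hF hH
    simp_rw [lintegral_add_left (hF.mul_const _), lintegral_mul_const _ hF,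
      lintegral_const_mul _ hH]
    rw [lintegral_add_left (hH.const_mul _), lintegral_const_mul _ hH, lintegral_mul_const _ hF]
    ring
  have h : ∫⁻ s, ∫⁻ t, G₁ t * G₂ s + G₁ s * G₂ t ∂μ ∂μ ≤
      ∫⁻ s, ∫⁻ t, G₃ t * G₄ s + G₃ s * G₄ t ∂μ ∂μ :=
    lintegral_mono fun s => lintegral_mono fun t => four_functions_symmetrized hG t s
  rwa [hsymm _ _ hG₁ hG₂, hsymm _ _ hG₃ hG₄,
    ENNReal.mul_le_mul_iff_right two_ne_zero ENNReal.ofNat_ne_top] at h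

end FourFunctions

theorem Fin.cons_inf_cons {n : ℕ} {α : Fin (n + 1) → Type*} [∀ i, Lattice (α i)] (a b : α 0)
    (x y : ∀ i : Fin n, α i.succ) :
    Fin.cons (a ⊓ b) (x ⊓ y) = (Fin.cons a x ⊓ Fin.cons b y : ∀ i, α i) := by
  ext i
  cases i using Fin.cases <;> rfl

theorem Fin.cons_sup_cons {n : ℕ} {α : Fin (n + 1) → Type*} [∀ i, Lattice (α i)] (a b : α 0)
    (x y : ∀ i : Fin n, α i.succ) :
    Fin.cons (a ⊔ b) (x ⊔ y) = (Fin.cons a x ⊔ Fin.cons b y : ∀ i, α i) := by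
  ext i
  cases i using Fin.cases <;> rfl

theorem measurable_fin_cons {α : Type*} [MeasurableSpace α] {n : ℕ} :
    Measurable fun p : α × (Fin n → α) => (Fin.cons p.1 p.2 : Fin (n + 1) → α) := by
  convert (MeasurableEquiv.piFinSuccAbove (fun _ : Fin (n + 1) => α) 0).symm.measurable using 1
  ext p : 1
  simp [Fin.consEquiv]

theorem lintegral_pi_fin_succ {α : Type*} [MeasurableSpace α] (μ : Measure α) [SigmaFinite μ]
    {n : ℕ} {h : (Fin (n + 1) → α) → ℝ≥0∞} (hh : Measurable h) :
    ∫⁻ x, h x ∂Measure.pi (fun _ => μ) =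
      ∫⁻ t, ∫⁻ y, h (Fin.cons t y) ∂Measure.pi (fun _ => μ) ∂μ := by
  rw [← ((measurePreserving_piFinSuccAbove (fun _ => μ) 0).symm).lintegral_comp hh,
    lintegral_prod]
  · simp [Fin.consEquiv]
  · exact (hh.comp (MeasurableEquiv.measurable _)).aemeasurable

theorem lintegral_mul_lintegral_le_of_four_functions_pi {α : Type*} [LinearOrder α]
    [MeasurableSpace α] (μ : Measure α) [SigmaFinite μ] :
    ∀ (n : ℕ) {h₁ h₂ h₃ h₄ : (Fin n → α) → ℝ≥0∞}, Measurable h₁ → Measurable h₂ →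
      Measurable h₃ → Measurable h₄ → (∀ x y, h₁ x * h₂ y ≤ h₃ (x ⊓ y) * h₄ (x ⊔ y)) →
      (∫⁻ x, h₁ x ∂Measure.pi (fun _ => μ)) * (∫⁻ x, h₂ x ∂Measure.pi (fun _ => μ)) ≤
        (∫⁻ x, h₃ x ∂Measure.pi (fun _ => μ)) * (∫⁻ x, h₄ x ∂Measure.pi (fun _ => μ))
  | 0, h₁, h₂, h₃, h₄, _, _, _, _, hh => by
    simpa [Measure.pi_of_empty, Subsingleton.elim _ (isEmptyElim : Fin 0 → α)] using
      hh isEmptyElim isEmptyElim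
  | n + 1, h₁, h₂, h₃, h₄, hh₁, hh₂, hh₃, hh₄, hh => by
    have hcons : ∀ {h : (Fin (n + 1) → α) → ℝ≥0∞}, Measurable h →
        Measurable fun p : α × (Fin n → α) => h (Fin.cons p.1 p.2) := fun hh =>
      hh.comp measurable_fin_cons
    rw [lintegral_pi_fin_succ μ hh₁, lintegral_pi_fin_succ μ hh₂, lintegral_pi_fin_succ μ hh₃,
      lintegral_pi_fin_succ μ hh₄]
    refine lintegral_mul_lintegral_le_of_four_functions μ (hcons hh₁).lintegral_prod_right'
      (hcons hh₂).lintegral_prod_right' (hcons hh₃).lintegral_prod_right'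
      (hcons hh₄).lintegral_prod_right' fun t s => ?_
    refine lintegral_mul_lintegral_le_of_four_functions_pi μ n
      ((hcons hh₁).comp measurable_prodMk_left) ((hcons hh₂).comp measurable_prodMk_left)
      ((hcons hh₃).comp measurable_prodMk_left) ((hcons hh₄).comp measurable_prodMk_left)
      fun x y => ?_
    simpa only [Fin.cons_inf_cons, Fin.cons_sup_cons] using hh (Fin.cons t x) (Fin.cons s y)

theorem AEMeasurable.exists_measurable_sandwich {X β : Type*} [MeasurableSpace X]
    [MeasurableSpace β] [Preorder β] [BoundedOrder β] {μ : Measure X} {f : X → β}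
    (hf : AEMeasurable f μ) :
    ∃ g h : X → β, Measurable g ∧ Measurable h ∧ g ≤ f ∧ f ≤ h ∧ g =ᵐ[μ] f ∧ h =ᵐ[μ] f := by
  classical
  set s := toMeasurable μ {x | f x ≠ hf.mk f x}
  have hs : ∀ᵐ x ∂μ, x ∉ s := by
    rw [← measure_eq_zero_iff_ae_notMem, measure_toMeasurable, ← ae_iff]
    exact hf.ae_eq_mk
  have hfs : ∀ x ∉ s, hf.mk f x = f x := fun x hx => by
    by_contra h
    exact hx (subset_toMeasurable _ _ (Ne.symm h))
  refine ⟨s.piecewise ⊥ (hf.mk f), s.piecewise ⊤ (hf.mk f),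
    Measurable.piecewise (measurableSet_toMeasurable _ _) measurable_const hf.measurable_mk,
    Measurable.piecewise (measurableSet_toMeasurable _ _) measurable_const hf.measurable_mk,
    fun x => ?_, fun x => ?_, ?_, ?_⟩
  · by_cases hx : x ∈ s <;> simp [hx, hfs]
  · by_cases hx : x ∈ s <;> simp [hx, hfs]
  · filter_upwards [hs] with x hx using by simp [hx, hfs]
  · filter_upwards [hs] with x hx using by simp [hx, hfs]

theorem lintegral_mul_lintegral_le_of_logSupermodular {α : Type*} [LinearOrder α]
    [MeasurableSpace α] (μ : Measure α) [SigmaFinite μ] {n : ℕ} {f : (Fin n → α) → ℝ≥0∞}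
    (hf : AEMeasurable f (Measure.pi fun _ => μ)) (hfl : LogSupermodular f)
    {Φ Ψ : (Fin n → α) → ℝ≥0∞} (hΦ : Measurable Φ) (hΨ : Measurable Ψ) (hΦm : Monotone Φ)
    (hΨm : Monotone Ψ) :
    (∫⁻ x, Φ x ∂(Measure.pi fun _ => μ).withDensity f) *
        ∫⁻ x, Ψ x ∂(Measure.pi fun _ => μ).withDensity f ≤
      (Measure.pi fun _ => μ).withDensity f Set.univ *
        ∫⁻ x, Φ x * Ψ x ∂(Measure.pi fun _ => μ).withDensity f := by
  -- Nothing is assumed of `f` beyond a.e.-measurability; the four functions inequality lets us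
  -- replace it by a measurable minorant `g` on the left and a measurable majorant `h` on the right.
  obtain ⟨g, h, hg, hh, hgf, hfh, hg_ae, hh_ae⟩ := hf.exists_measurable_sandwich
  have hlower : ∀ F, Measurable F → ∫⁻ x, F x ∂(Measure.pi fun _ => μ).withDensity f =
      ∫⁻ x, g x * F x ∂Measure.pi fun _ => μ := fun F hF => by
    rw [← withDensity_congr_ae hg_ae, lintegral_withDensity_eq_lintegral_mul _ hg hF]
    rfl
  have hupper : ∀ F, Measurable F → ∫⁻ x, F x ∂(Measure.pi fun _ => μ).withDensity f =
      ∫⁻ x, h x * F x ∂Measure.pi fun _ => μ := fun F hF => by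
    rw [← withDensity_congr_ae hh_ae, lintegral_withDensity_eq_lintegral_mul _ hh hF]
    rfl
  rw [hlower Φ hΦ, hlower Ψ hΨ, hupper (fun x => Φ x * Ψ x) (hΦ.mul hΨ), ← lintegral_one,
    hupper _ measurable_const]
  simp only [mul_one]
  refine lintegral_mul_lintegral_le_of_four_functions_pi μ n (hg.mul hΦ) (hg.mul hΨ) hh
    (hh.mul (hΦ.mul hΨ)) fun x y => ?_
  calc g x * Φ x * (g y * Ψ y) = (g x * g y) * (Φ x * Ψ y) := by ring
    _ ≤ (h (x ⊓ y) * h (x ⊔ y)) * (Φ (x ⊔ y) * Ψ (x ⊔ y)) := by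
        gcongr ?_ * ?_
        · exact (mul_le_mul' (hgf x) (hgf y)).trans
            ((hfl x y).trans (mul_le_mul' (hfh _) (hfh _)))
        · exact mul_le_mul' (hΦm le_sup_left) (hΨm le_sup_right)
    _ = h (x ⊓ y) * (h (x ⊔ y) * (Φ (x ⊔ y) * Ψ (x ⊔ y))) := by ring

def IsPositivelyAssociated {X : Type*} [MeasurableSpace X] [Preorder X] (ρ : Measure X) :
    Prop :=
  ∀ φ ψ : X → ℝ, Measurable φ → Measurable ψ → Monotone φ → Monotone ψ →
    (∃ C, ∀ x, |φ x| ≤ C) → (∃ C, ∀ x, |ψ x| ≤ C) →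
    (∫ x, φ x ∂ρ) * (∫ x, ψ x ∂ρ) ≤ ∫ x, φ x * ψ x ∂ρ

section Association

open ProbabilityTheory

variable {X : Type*} [MeasurableSpace X] [Preorder X] {ρ : Measure X}

theorem integral_mul_integral_le_of_lintegral
    (hρ : ∀ Φ Ψ : X → ℝ≥0∞, Measurable Φ → Measurable Ψ → Monotone Φ → Monotone Ψ →
      (∫⁻ x, Φ x ∂ρ) * (∫⁻ x, Ψ x ∂ρ) ≤ ∫⁻ x, Φ x * Ψ x ∂ρ)
    {φ ψ : X → ℝ} (hφ : Measurable φ) (hψ : Measurable ψ) (hφm : Monotone φ)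
    (hψm : Monotone ψ) (hφ₀ : 0 ≤ φ) (hψ₀ : 0 ≤ ψ) (hφi : Integrable φ ρ) (hψi : Integrable ψ ρ)
    (hφψi : Integrable (fun x => φ x * ψ x) ρ) :
    (∫ x, φ x ∂ρ) * (∫ x, ψ x ∂ρ) ≤ ∫ x, φ x * ψ x ∂ρ := by
  have hφψ₀ : 0 ≤ fun x => φ x * ψ x := fun x => mul_nonneg (hφ₀ x) (hψ₀ x)
  have h := hρ _ _ hφ.ennreal_ofReal hψ.ennreal_ofReal (ENNReal.ofReal_mono.comp hφm)
    (ENNReal.ofReal_mono.comp hψm)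
  simp_rw [← ENNReal.ofReal_mul (hφ₀ _)] at h
  rw [← ofReal_integral_eq_lintegral_ofReal hφi (ae_of_all _ hφ₀),
    ← ofReal_integral_eq_lintegral_ofReal hψi (ae_of_all _ hψ₀),
    ← ofReal_integral_eq_lintegral_ofReal hφψi (ae_of_all _ hφψ₀),
    ← ENNReal.ofReal_mul (integral_nonneg hφ₀)] at h
  exact (ENNReal.ofReal_le_ofReal_iff (integral_nonneg hφψ₀)).1 h

theorem isPositivelyAssociated_of_lintegral [IsProbabilityMeasure ρ]
    (hρ : ∀ Φ Ψ : X → ℝ≥0∞, Measurable Φ → Measurable Ψ → Monotone Φ → Monotone Ψ →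
      (∫⁻ x, Φ x ∂ρ) * (∫⁻ x, Ψ x ∂ρ) ≤ ∫⁻ x, Φ x * Ψ x ∂ρ) :
    IsPositivelyAssociated ρ := by
  rintro φ ψ hφ hψ hφm hψm ⟨C₁, hC₁⟩ ⟨C₂, hC₂⟩
  have hφ₂ : MemLp φ 2 ρ := MemLp.of_bound hφ.aestronglyMeasurable C₁ (ae_of_all _ hC₁)
  have hψ₂ : MemLp ψ 2 ρ := MemLp.of_bound hψ.aestronglyMeasurable C₂ (ae_of_all _ hC₂)
  have hφ₂' : MemLp (fun x => φ x + C₁) 2 ρ := hφ₂.add (memLp_const C₁)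
  have hψ₂' : MemLp (fun x => ψ x + C₂) 2 ρ := hψ₂.add (memLp_const C₂)
  have hcov : 0 ≤ cov[fun x => φ x + C₁, fun x => ψ x + C₂; ρ] := by
    rw [covariance_eq_sub hφ₂' hψ₂', sub_nonneg]
    exact integral_mul_integral_le_of_lintegral hρ (hφ.add_const _) (hψ.add_const _)
      (hφm.add_const _) (hψm.add_const _) (fun x => neg_le_iff_add_nonneg.1 (abs_le.1 (hC₁ x)).1)
      (fun x => neg_le_iff_add_nonneg.1 (abs_le.1 (hC₂ x)).1) (hφ₂'.integrable one_le_two)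
      (hψ₂'.integrable one_le_two) (hφ₂'.integrable_mul hψ₂')
  rwa [covariance_add_const_left (hφ₂.integrable one_le_two),
    covariance_add_const_right (hψ₂.integrable one_le_two),
    covariance_eq_sub hφ₂ hψ₂, sub_nonneg] at hcov

end Association

theorem isPositivelyAssociated_withDensity_of_logSupermodular {α : Type*} [LinearOrder α]
    [MeasurableSpace α] (μ : Measure α) [SigmaFinite μ] {n : ℕ} {f : (Fin n → α) → ℝ≥0∞}
    (hf : AEMeasurable f (Measure.pi fun _ => μ)) (hfl : LogSupermodular f)
    [IsProbabilityMeasure ((Measure.pi fun _ => μ).withDensity f)] :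
    IsPositivelyAssociated ((Measure.pi fun _ => μ).withDensity f) :=
  isPositivelyAssociated_of_lintegral fun _ _ hΦ hΨ hΦm hΨm => by
    simpa using lintegral_mul_lintegral_le_of_logSupermodular μ hf hfl hΦ hΨ hΦm hΨm

theorem isProbabilityMeasure_coulombMeasure {n : ℕ} {β : ℝ} {V : ℝ → EReal}
    (hInt : Integrable (coulombDensity n β V)) (hZ : 0 < ∫ x, coulombDensity n β V x) :
    IsProbabilityMeasure (coulombMeasure n β V) := by
  constructor
  rw [coulombMeasure, withDensity_apply _ MeasurableSet.univ, Measure.restrict_univ,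
    ← ofReal_integral_eq_lintegral_ofReal (hInt.div_const _)
      (ae_of_all _ fun x => div_nonneg (coulombDensity_nonneg n β V x) hZ.le),
    integral_div, div_self hZ.ne', ENNReal.ofReal_one]

theorem logSupermodular_and_positively_associated_coulomb_gas_general
    (n : ℕ) (β : ℝ) (hβ : 0 < β) (V : ℝ → EReal)
    (hInt : Integrable (coulombDensity n β V))
    (hZ : 0 < ∫ x : Fin n → ℝ, coulombDensity n β V x) :
    (∀ x y : Fin n → ℝ,
      (coulombDensity n β V x / ∫ z : Fin n → ℝ, coulombDensity n β V z) *
        (coulombDensity n β V y / ∫ z : Fin n → ℝ, coulombDensity n β V z) ≤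
      (coulombDensity n β V (x ⊓ y) / ∫ z : Fin n → ℝ, coulombDensity n β V z) *
        (coulombDensity n β V (x ⊔ y) / ∫ z : Fin n → ℝ, coulombDensity n β V z)) ∧
    (∀ φ ψ : (Fin n → ℝ) → ℝ,
      Measurable φ → Measurable ψ → Monotone φ → Monotone ψ →
      (∃ C, ∀ x, |φ x| ≤ C) → (∃ C, ∀ x, |ψ x| ≤ C) →
      (∫ x, φ x ∂(coulombMeasure n β V)) * (∫ x, ψ x ∂(coulombMeasure n β V)) ≤
        ∫ x, φ x * ψ x ∂(coulombMeasure n β V)) := by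
  have hdensity : LogSupermodular fun x => coulombDensity n β V x / ∫ z, coulombDensity n β V z :=
    (logSupermodular_coulombDensity n hβ.le V).div_const hZ.le
  refine ⟨hdensity, ?_⟩
  have hprob := isProbabilityMeasure_coulombMeasure hInt hZ
  rw [coulombMeasure, volume_pi] at hprob ⊢
  exact isPositivelyAssociated_withDensity_of_logSupermodular volume
    (hInt.div_const _).aemeasurable.ennreal_ofReal
    (hdensity.ennreal_ofReal fun x => div_nonneg (coulombDensity_nonneg n β V x) hZ.le)

/-- For any potential `V` and any `β > 0` (with finite positive normalizing constant),
the density of the ordered β-Coulomb gas is log-supermodular; consequently, the points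
of the gas are positively associated. -/
theorem logSupermodular_and_positively_associated_coulomb_gas
    (n : ℕ) (hn : 1 ≤ n) (β : ℝ) (hβ : 0 < β) (V : ℝ → EReal)
    (hVbot : ∀ x, V x ≠ ⊥)
    (hInt : Integrable (coulombDensity n β V))
    (hZ : 0 < ∫ x : Fin n → ℝ, coulombDensity n β V x) :
    (∀ x y : Fin n → ℝ,
      (coulombDensity n β V x / ∫ z : Fin n → ℝ, coulombDensity n β V z) *
        (coulombDensity n β V y / ∫ z : Fin n → ℝ, coulombDensity n β V z) ≤
      (coulombDensity n β V (x ⊓ y) / ∫ z : Fin n → ℝ, coulombDensity n β V z) *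
        (coulombDensity n β V (x ⊔ y) / ∫ z : Fin n → ℝ, coulombDensity n β V z)) ∧
    (∀ φ ψ : (Fin n → ℝ) → ℝ,
      Measurable φ → Measurable ψ → Monotone φ → Monotone ψ →
      (∃ C, ∀ x, |φ x| ≤ C) → (∃ C, ∀ x, |ψ x| ≤ C) →
      (∫ x, φ x ∂(coulombMeasure n β V)) * (∫ x, ψ x ∂(coulombMeasure n β V)) ≤
        ∫ x, φ x * ψ x ∂(coulombMeasure n β V)) :=
  logSupermodular_and_positively_associated_coulomb_gas_general n β hβ V hInt hZ
end
end
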